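/- arXiv:2601.00119 — 5 statements merged into one kernel-verified Lean document; each statement's English description precedes it below -/
import Mathlib

section
/- Let $c>0$ and $\alpha\in(0,1)$, and let $X_1,X_2,\dots$ be i.i.d. real random variables with $\mathbb{P}(|X_1|>x)\le c x^{-\alpha}$ for all $x>1$. For integers $m\ge 1$ and reals $s\ge 1$, set $S_m=\sum_{i=1}^m (X_i\wedge s m^{1/\alpha})$. Then there exists a constant $C>0$ such that for all $m\ge 1$, $t\ge 0$ and $s\ge 1$, $\mathbb{P}(S_m\ge t m^{1/\alpha})\le C\exp(-t/s)$. -/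
open MeasureTheory ProbabilityTheory Filter
open Set

lemma exp_aux (u : ℝ) (hu : u ≤ 1) : Real.exp u ≤ 1 + Real.exp 1 * max u 0 := by
  rcases le_or_gt u 0 with h | h
  · have h1 : Real.exp u ≤ 1 := Real.exp_le_one_iff.mpr h
    rw [max_eq_right h]; linarith
  · have h1 := Real.add_one_le_exp (-u)
    have h2 : Real.exp u * Real.exp (-u) = 1 := by
      rw [← Real.exp_add]; simp
    have h3 : Real.exp u ≤ Real.exp 1 := Real.exp_le_exp.mpr hu
    have h4 := Real.exp_pos u
    rw [max_eq_left h.le]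
    nlinarith

lemma trunc_moment {Ω : Type*} [MeasureSpace Ω] [IsProbabilityMeasure (ℙ : Measure Ω)]
    (c α : ℝ) (hc : 0 < c) (hα0 : 0 < α) (hα1 : α < 1)
    (Z : Ω → ℝ) (hZ : Measurable Z)
    (htail : ∀ x : ℝ, 1 < x → ℙ {ω | x < |Z ω|} ≤ ENNReal.ofReal (c * x ^ (-α)))
    (b : ℝ) (hb : 1 ≤ b) :
    ∫ ω, min (max (Z ω) 0) b ∂ℙ ≤ 1 + c * b ^ (1 - α) / (1 - α) := by
  have h1α : (0:ℝ) < 1 - α := by linarith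
  have hb0 : (0:ℝ) < b := lt_of_lt_of_le one_pos hb
  set g : Ω → ℝ := fun ω => min (max (Z ω) 0) b with hg
  have hgmeas : Measurable g := (hZ.max measurable_const).min measurable_const
  have hgnn : ∀ ω, 0 ≤ g ω := fun ω => le_min (le_max_right _ _) hb0.le
  -- layer cake
  have hlc : ∫⁻ ω, ENNReal.ofReal (g ω) ∂ℙ = ∫⁻ x in Ioi 0, ℙ {a | x < g a} := by
    exact lintegral_eq_lintegral_meas_lt ℙ (Filter.Eventually.of_forall hgnn)
      hgmeas.aemeasurable
  -- split the domain
  have hsplit1 : (Ioi (0:ℝ)) = Ioc 0 1 ∪ Ioi 1 := (Ioc_union_Ioi_eq_Ioi one_pos.le).symm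
  have hsplit2 : (Ioi (1:ℝ)) = Ioc 1 b ∪ Ioi b := (Ioc_union_Ioi_eq_Ioi hb).symm
  have hI1 : ∫⁻ x in Ioc (0:ℝ) 1, ℙ {a | x < g a} ≤ 1 := by
    calc ∫⁻ x in Ioc (0:ℝ) 1, ℙ {a | x < g a} ≤ ∫⁻ _ in Ioc (0:ℝ) 1, 1 :=
          lintegral_mono fun x => prob_le_one
      _ = 1 := by simp
  have hI3 : ∫⁻ x in Ioi b, ℙ {a | x < g a} = 0 := by
    have : ∀ x ∈ Ioi b, ℙ {a | x < g a} = 0 := by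
      intro x hx
      have : {a | x < g a} = ∅ := by
        ext a; simp only [Set.mem_setOf_eq, Set.mem_empty_iff_false, iff_false, not_lt]
        exact le_trans (min_le_right _ _) (le_of_lt hx)
      simp [this]
    calc ∫⁻ x in Ioi b, ℙ {a | x < g a} = ∫⁻ _ in Ioi b, 0 :=
          setLIntegral_congr_fun measurableSet_Ioi this
      _ = 0 := by simp
  have hI2 : ∫⁻ x in Ioc (1:ℝ) b, ℙ {a | x < g a}
      ≤ ENNReal.ofReal (c * b ^ (1 - α) / (1 - α)) := by
    have hmono : ∫⁻ x in Ioc (1:ℝ) b, ℙ {a | x < g a}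
        ≤ ∫⁻ x in Ioc (1:ℝ) b, ENNReal.ofReal (c * x ^ (-α)) := by
      refine setLIntegral_mono' measurableSet_Ioc fun x hx => ?_
      refine le_trans ?_ (htail x hx.1)
      apply measure_mono
      intro a ha
      simp only [Set.mem_setOf_eq] at ha ⊢
      calc x < g a := ha
        _ ≤ max (Z a) 0 := min_le_left _ _
        _ ≤ |Z a| := by
          rcases le_or_gt (Z a) 0 with h | h
          · rw [max_eq_right h]; exact abs_nonneg _
          · rw [max_eq_left h.le]; exact le_abs_self _
    have hint : IntegrableOn (fun x : ℝ => c * x ^ (-α)) (Ioc 1 b) := by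
      have := (intervalIntegral.intervalIntegrable_rpow' (a := 1) (b := b) (by linarith : (-1:ℝ) < -α)).const_mul c
      rwa [intervalIntegrable_iff_integrableOn_Ioc_of_le hb] at this
    have heq : ∫⁻ x in Ioc (1:ℝ) b, ENNReal.ofReal (c * x ^ (-α))
        = ENNReal.ofReal (∫ x in Ioc (1:ℝ) b, c * x ^ (-α)) := by
      rw [← ofReal_integral_eq_lintegral_ofReal hint]
      filter_upwards [ae_restrict_mem measurableSet_Ioc] with x hx
      have : (0:ℝ) < x := lt_of_lt_of_le one_pos hx.1.le
      positivity
    have hval : ∫ x in Ioc (1:ℝ) b, c * x ^ (-α) ≤ c * b ^ (1 - α) / (1 - α) := by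
      rw [← intervalIntegral.integral_of_le hb, intervalIntegral.integral_const_mul,
        integral_rpow (Or.inl (by linarith : (-1:ℝ) < -α))]
      rw [Real.one_rpow]
      have : -α + 1 = 1 - α := by ring
      rw [this, mul_div_assoc]
      have h1 : (0:ℝ) ≤ b ^ (1 - α) := Real.rpow_nonneg hb0.le _
      gcongr
      linarith
    calc ∫⁻ x in Ioc (1:ℝ) b, ℙ {a | x < g a}
        ≤ ∫⁻ x in Ioc (1:ℝ) b, ENNReal.ofReal (c * x ^ (-α)) := hmono
      _ = ENNReal.ofReal (∫ x in Ioc (1:ℝ) b, c * x ^ (-α)) := heq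
      _ ≤ ENNReal.ofReal (c * b ^ (1 - α) / (1 - α)) := ENNReal.ofReal_le_ofReal hval
  -- assemble
  have htotal : ∫⁻ ω, ENNReal.ofReal (g ω) ∂ℙ
      ≤ ENNReal.ofReal (1 + c * b ^ (1 - α) / (1 - α)) := by
    rw [hlc, hsplit1, lintegral_union measurableSet_Ioi (Ioc_disjoint_Ioi le_rfl),
      hsplit2, lintegral_union measurableSet_Ioi (Ioc_disjoint_Ioi le_rfl), hI3, add_zero]
    calc (∫⁻ x in Ioc (0:ℝ) 1, ℙ {a | x < g a}) + ∫⁻ x in Ioc (1:ℝ) b, ℙ {a | x < g a}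
        ≤ 1 + ENNReal.ofReal (c * b ^ (1 - α) / (1 - α)) := add_le_add hI1 hI2
      _ = ENNReal.ofReal (1 + c * b ^ (1 - α) / (1 - α)) := by
          rw [ENNReal.ofReal_add (by norm_num) (by positivity)]
          simp
  have hgint : ∫ ω, g ω ∂ℙ = (∫⁻ ω, ENNReal.ofReal (g ω) ∂ℙ).toReal := by
    rw [integral_eq_lintegral_of_nonneg_ae (Filter.Eventually.of_forall hgnn)
      hgmeas.aestronglyMeasurable]
  rw [show (fun ω => min (max (Z ω) 0) b) = g from rfl] at *
  rw [hgint]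
  exact ENNReal.toReal_le_of_le_ofReal (by positivity) htotal

/-- Big jumps principle for i.i.d. heavy-tailed variables, case `0 < α < 1`. -/
theorem big_jumps_alpha_lt_one {Ω : Type*} [MeasureSpace Ω]
    [IsProbabilityMeasure (ℙ : Measure Ω)]
    (c α : ℝ) (hc : 0 < c) (hα0 : 0 < α) (hα1 : α < 1)
    (X : ℕ → Ω → ℝ) (hmeas : ∀ i, Measurable (X i))
    (hindep : iIndepFun X ℙ)
    (hident : ∀ i, IdentDistrib (X i) (X 0) ℙ ℙ)
    (htail : ∀ x : ℝ, 1 < x → ℙ {ω | x < |X 0 ω|} ≤ ENNReal.ofReal (c * x ^ (-α))) :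
    ∃ C : ℝ, 0 < C ∧ ∀ (m : ℕ) (t s : ℝ), 1 ≤ m → 0 ≤ t → 1 ≤ s →
      ℙ {ω | t * (m : ℝ) ^ (1 / α) ≤
          ∑ i ∈ Finset.range m, min (X i ω) (s * (m : ℝ) ^ (1 / α))}
        ≤ ENNReal.ofReal (C * Real.exp (-t / s)) := by
  have h1α : (0:ℝ) < 1 - α := by linarith
  set K : ℝ := Real.exp 1 * (1 + c / (1 - α)) with hKdef
  have hK0 : 0 < K := by positivity
  refine ⟨Real.exp K, Real.exp_pos _, ?_⟩
  intro m t s hm ht hs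
  have hm1 : (1:ℝ) ≤ (m:ℝ) := by exact_mod_cast hm
  have hm0 : (0:ℝ) < m := by linarith
  set M : ℝ := (m:ℝ) ^ (1/α) with hMdef
  have hM1 : (1:ℝ) ≤ M := Real.one_le_rpow hm1 (by positivity)
  have hM0 : (0:ℝ) < M := lt_of_lt_of_le one_pos hM1
  have hMm : (m:ℝ) ≤ M := by
    nth_rewrite 1 [← Real.rpow_one (m:ℝ)]
    exact Real.rpow_le_rpow_of_exponent_le hm1 (by rw [le_div_iff₀ hα0]; linarith)
  have hMα : M ^ α = (m:ℝ) := by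
    rw [hMdef, ← Real.rpow_mul hm0.le, one_div, inv_mul_cancel₀ hα0.ne', Real.rpow_one]
  set b : ℝ := s * M with hbdef
  have hb1 : (1:ℝ) ≤ b := by
    calc (1:ℝ) = 1 * 1 := by ring
    _ ≤ s * M := mul_le_mul hs hM1 one_pos.le (by linarith)
  have hb0 : (0:ℝ) < b := lt_of_lt_of_le one_pos hb1
  set lam : ℝ := b⁻¹ with hlamdef
  have hlam0 : 0 ≤ lam := inv_nonneg.mpr hb0.le
  set Y : ℕ → Ω → ℝ := fun i ω => min (X i ω) b with hYdef
  have hYmeas : ∀ i, Measurable (Y i) := fun i => (hmeas i).min measurable_const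
  have hYindep : iIndepFun Y ℙ :=
    hindep.comp (fun _ x => min x b) (fun _ => measurable_id.min measurable_const)
  have hlamY1 : ∀ i ω, lam * Y i ω ≤ 1 := by
    intro i ω
    calc lam * Y i ω ≤ lam * b := mul_le_mul_of_nonneg_left (min_le_right _ _) hlam0
    _ = 1 := inv_mul_cancel₀ hb0.ne'
  have hYint : ∀ i, Integrable (fun ω => Real.exp (lam * Y i ω)) ℙ := by
    intro i
    refine Integrable.mono' (integrable_const (Real.exp 1))
      (((hYmeas i).const_mul lam).exp.aestronglyMeasurable)
      (Filter.Eventually.of_forall fun ω => ?_)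
    rw [Real.norm_eq_abs, Real.abs_exp]
    exact Real.exp_le_exp.mpr (hlamY1 i ω)
  -- bound on each mgf
  have hmgf : ∀ i ∈ Finset.range m, mgf (Y i) ℙ lam ≤ Real.exp (K / m) := by
    intro i _
    set g : ℕ → Ω → ℝ := fun j ω => min (max (X j ω) 0) b with hgdef
    have hgmeas : ∀ j, Measurable (g j) :=
      fun j => ((hmeas j).max measurable_const).min measurable_const
    have hgnn : ∀ j ω, 0 ≤ g j ω := fun j ω => le_min (le_max_right _ _) hb0.le
    have hgb : ∀ j ω, g j ω ≤ b := fun j ω => min_le_right _ _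
    have hgint : ∀ j, Integrable (g j) ℙ := by
      intro j
      refine Integrable.mono' (integrable_const b) (hgmeas j).aestronglyMeasurable
        (Filter.Eventually.of_forall fun ω => ?_)
      rw [Real.norm_eq_abs, abs_of_nonneg (hgnn j ω)]
      exact hgb j ω
    have hpt : ∀ ω, Real.exp (lam * Y i ω) ≤ 1 + Real.exp 1 * (lam * g i ω) := by
      intro ω
      refine (exp_aux (lam * Y i ω) (hlamY1 i ω)).trans ?_
      gcongr
      refine max_le ?_ (by positivity)
      refine mul_le_mul_of_nonneg_left ?_ hlam0
      exact min_le_min (le_max_left _ _) le_rfl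
    have hmgf_eq : mgf (Y i) ℙ lam = ∫ ω, Real.exp (lam * Y i ω) ∂ℙ := rfl
    have hintmono : ∫ ω, Real.exp (lam * Y i ω) ∂ℙ
        ≤ ∫ ω, (1 + Real.exp 1 * (lam * g i ω)) ∂ℙ := by
      refine integral_mono (hYint i) ?_ hpt
      exact (integrable_const 1).add (((hgint i).const_mul lam).const_mul (Real.exp 1))
    have hintval : ∫ ω, (1 + Real.exp 1 * (lam * g i ω)) ∂ℙ
        = 1 + Real.exp 1 * (lam * ∫ ω, g i ω ∂ℙ) := by
      rw [integral_add (integrable_const 1) (((hgint i).const_mul lam).const_mul (Real.exp 1))]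
      rw [integral_const_mul, integral_const_mul]
      simp
    have hgident : ∫ ω, g i ω ∂ℙ = ∫ ω, g 0 ω ∂ℙ := by
      have hu : Measurable (fun x : ℝ => min (max x 0) b) :=
        (measurable_id.max measurable_const).min measurable_const
      exact ((hident i).comp hu).integral_eq
    have hg0 : ∫ ω, g 0 ω ∂ℙ ≤ 1 + c * b ^ (1 - α) / (1 - α) :=
      trunc_moment c α hc hα0 hα1 (X 0) (hmeas 0) htail b hb1
    -- lam * (1 + c b^{1-α}/(1-α)) ≤ (1 + c/(1-α))/m
    have hbound : lam * (1 + c * b ^ (1 - α) / (1 - α)) ≤ (1 + c / (1 - α)) / m := by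
      have hbm : (m:ℝ) ≤ b := le_trans hMm (by nlinarith)
      have h1 : lam ≤ 1 / m := by
        rw [hlamdef, one_div]
        exact inv_anti₀ hm0 hbm
      have hbα : (m:ℝ) ≤ b ^ α := by
        rw [hbdef, Real.mul_rpow (by linarith) hM0.le, hMα]
        nlinarith [Real.one_le_rpow hs hα0.le]
      have h2 : lam * b ^ (1 - α) ≤ 1 / m := by
        have : lam * b ^ (1 - α) = (b ^ α)⁻¹ := by
          rw [hlamdef, ← Real.rpow_neg_one b, ← Real.rpow_add hb0, ← Real.rpow_neg hb0.le]
          congr 1; ring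
        rw [this, one_div]
        exact inv_anti₀ hm0 hbα
      have hg1 : (0:ℝ) ≤ b ^ (1-α) := Real.rpow_nonneg hb0.le _
      have expand : lam * (1 + c * b ^ (1 - α) / (1 - α))
          = lam + (c / (1-α)) * (lam * b ^ (1-α)) := by field_simp
      rw [expand]
      have : (1 + c / (1 - α)) / m = 1/m + (c/(1-α)) * (1/m) := by ring
      rw [this]
      have hc1α : (0:ℝ) ≤ c / (1-α) := by positivity
      exact add_le_add h1 (mul_le_mul_of_nonneg_left h2 hc1α)
    have hKm : 1 + Real.exp 1 * ((1 + c / (1 - α)) / m) ≤ Real.exp (K / m) := by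
      have := Real.add_one_le_exp (K / m)
      have heq : K / m = Real.exp 1 * ((1 + c / (1 - α)) / m) := by
        rw [hKdef]; ring
      linarith [heq ▸ this]
    calc mgf (Y i) ℙ lam ≤ 1 + Real.exp 1 * (lam * ∫ ω, g i ω ∂ℙ) := by
          rw [hmgf_eq]; exact hintmono.trans (le_of_eq hintval)
      _ ≤ 1 + Real.exp 1 * ((1 + c / (1 - α)) / m) := by
          gcongr 1 + Real.exp 1 * ?_
          rw [hgident]
          refine le_trans ?_ hbound
          exact mul_le_mul_of_nonneg_left (hg0.trans_eq' rfl) hlam0 |>.trans_eq' rfl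
      _ ≤ Real.exp (K / m) := hKm
  -- Chernoff
  set S : Ω → ℝ := ∑ i ∈ Finset.range m, Y i with hSdef
  have hSapp : ∀ ω, S ω = ∑ i ∈ Finset.range m, Y i ω := by
    intro ω; rw [hSdef]; simp [Finset.sum_apply]
  have hSint : Integrable (fun ω => Real.exp (lam * S ω)) ℙ := by
    have hSmeas : Measurable S := by
      have : S = fun ω => ∑ i ∈ Finset.range m, Y i ω := funext hSapp
      rw [this]; exact Finset.measurable_sum _ fun i _ => hYmeas i
    refine Integrable.mono' (integrable_const (Real.exp m))
      ((hSmeas.const_mul lam).exp.aestronglyMeasurable)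
      (Filter.Eventually.of_forall fun ω => ?_)
    rw [Real.norm_eq_abs, Real.abs_exp]
    refine Real.exp_le_exp.mpr ?_
    rw [hSapp, mul_comm, Finset.sum_mul]
    calc ∑ i ∈ Finset.range m, Y i ω * lam ≤ ∑ _i ∈ Finset.range m, (1:ℝ) := by
          refine Finset.sum_le_sum fun i _ => ?_
          rw [mul_comm]; exact hlamY1 i ω
      _ = m := by simp
  have hcher := measure_ge_le_exp_mul_mgf (μ := ℙ) (X := S) (t := lam) (t * M) hlam0 hSint
  rw [hYindep.mgf_sum hYmeas] at hcher
  have hprod : ∏ i ∈ Finset.range m, mgf (Y i) ℙ lam ≤ Real.exp K := by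
    calc ∏ i ∈ Finset.range m, mgf (Y i) ℙ lam
        ≤ ∏ _i ∈ Finset.range m, Real.exp (K / m) :=
          Finset.prod_le_prod (fun i _ => mgf_nonneg) hmgf
      _ = Real.exp (K / m) ^ m := by rw [Finset.prod_const, Finset.card_range]
      _ = Real.exp ((m:ℝ) * (K / m)) := by rw [Real.exp_nat_mul]
      _ = Real.exp K := by rw [mul_div_cancel₀ K hm0.ne']
  -- conclude
  have hset : {ω | t * (m : ℝ) ^ (1 / α) ≤
      ∑ i ∈ Finset.range m, min (X i ω) (s * (m : ℝ) ^ (1 / α))} = {ω | t * M ≤ S ω} := by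
    ext ω
    simp only [Set.mem_setOf_eq, hSapp]
    exact Iff.rfl
  rw [hset]
  have hfinal : (ℙ {ω | t * M ≤ S ω}).toReal ≤ Real.exp K * Real.exp (-t / s) := by
    refine hcher.trans ?_
    have hlameq : -lam * (t * M) = -t / s := by
      rw [hlamdef, hbdef]
      field_simp
    rw [hlameq]
    calc Real.exp (-t/s) * ∏ i ∈ Finset.range m, mgf (Y i) ℙ lam
        ≤ Real.exp (-t/s) * Real.exp K :=
          mul_le_mul_of_nonneg_left hprod (Real.exp_pos _).le
      _ = Real.exp K * Real.exp (-t/s) := mul_comm _ _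
  calc ℙ {ω | t * M ≤ S ω} = ENNReal.ofReal (ℙ {ω | t * M ≤ S ω}).toReal :=
        (ENNReal.ofReal_toReal (measure_ne_top _ _)).symm
    _ ≤ ENNReal.ofReal (Real.exp K * Real.exp (-t / s)) := ENNReal.ofReal_le_ofReal hfinal
end

section
/- Let $c>0$ and $\alpha\in(1,2)$, and let $X_1,X_2,\dots$ be i.i.d. integrable real random variables with $\mathbb{E}[X_1]=0$ and $\mathbb{P}(|X_1|>x)\le c x^{-\alpha}$ for all $x>1$. For integers $m\ge 1$ and reals $s\ge 1$, set $S_m=\sum_{i=1}^m (X_i\wedge s m^{1/\alpha})$. Then there exists a constant $C>0$ such that for all $m\ge 1$, $t\ge 0$ and $s\ge 1$, $\mathbb{P}(S_m\ge t m^{1/\alpha})\le C\exp(-t/s)$. -/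
open MeasureTheory ProbabilityTheory Filter

section BigJumpsAux
open Set Real

lemma my_g_nonneg (u : ℝ) : 0 ≤ Real.exp u - 1 - u := by
  have := Real.add_one_le_exp u; linarith

lemma my_g_le_sq {u : ℝ} (h : |u| ≤ 1) : Real.exp u - 1 - u ≤ u ^ 2 := by
  have h2 := Real.exp_bound h (n := 2) (by norm_num)
  have hs : ∑ i ∈ Finset.range 2, u ^ i / (Nat.factorial i : ℝ) = 1 + u := by
    simp [Finset.sum_range_succ, Nat.factorial]
  rw [hs] at h2
  have habs : Real.exp u - (1 + u) ≤ |Real.exp u - (1 + u)| := le_abs_self _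
  have : |u| ^ 2 * ((2 + 1 : ℕ) / ((Nat.factorial 2 : ℝ) * 2)) ≤ u ^ 2 := by
    rw [sq_abs]
    have : ((2 + 1 : ℕ) : ℝ) / ((Nat.factorial 2 : ℝ) * 2) = 3 / 4 := by
      norm_num [Nat.factorial]
    rw [this]
    nlinarith [sq_nonneg u]
  nlinarith [h2, habs]

lemma my_g_min_le {l x M : ℝ} (hl : 0 ≤ l) (hM : 0 ≤ M) (hlM : l * M ≤ 1) :
    Real.exp (l * min x M) - 1 - l * min x M ≤ min (l ^ 2 * x ^ 2) (l * |x|) := by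
  rcases le_or_gt 0 x with hx | hx
  · have hmin0 : 0 ≤ min x M := le_min hx hM
    have hminx : min x M ≤ x := min_le_left _ _
    have hminM : min x M ≤ M := min_le_right _ _
    have hu0 : 0 ≤ l * min x M := mul_nonneg hl hmin0
    have hu1 : l * min x M ≤ 1 := le_trans (by nlinarith) hlM
    have h1 := my_g_le_sq (abs_le.2 ⟨by linarith, hu1⟩)
    refine le_min (h1.trans ?_) (h1.trans ?_)
    · nlinarith [mul_le_mul_of_nonneg_left (mul_self_le_mul_self hmin0 hminx) (mul_nonneg hl hl)]
    · rw [abs_of_nonneg hx]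
      nlinarith [mul_le_mul_of_nonneg_left hu1 hu0, mul_le_mul_of_nonneg_left hminx hl]
  · have hmin : min x M = x := min_eq_left (by linarith)
    rw [hmin]
    have hu : l * x ≤ 0 := mul_nonpos_of_nonneg_of_nonpos hl hx.le
    have hge : Real.exp (l * x) - 1 - l * x ≤ -(l * x) := by
      have : Real.exp (l * x) ≤ 1 := Real.exp_le_one_iff.2 hu
      linarith
    refine le_min ?_ ?_
    · rcases le_or_gt (|l * x|) 1 with h | h
      · have := my_g_le_sq h
        calc Real.exp (l * x) - 1 - l * x ≤ (l * x) ^ 2 := this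
          _ = l ^ 2 * x ^ 2 := by ring
      · have h2 : 1 ≤ -(l * x) := by
          rw [abs_of_nonpos hu] at h; linarith
        calc Real.exp (l * x) - 1 - l * x ≤ -(l * x) := hge
          _ ≤ (l * x) ^ 2 := by nlinarith
          _ = l ^ 2 * x ^ 2 := by ring
    · rw [abs_of_neg hx]
      calc Real.exp (l * x) - 1 - l * x ≤ -(l * x) := hge
        _ = l * (-x) := by ring


lemma my_tail_min_bound {Ω : Type*} [MeasureSpace Ω] [IsProbabilityMeasure (ℙ : Measure Ω)]
    (c α : ℝ) (hc : 0 < c) (hα0 : 1 < α) (hα1 : α < 2)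
    (W : Ω → ℝ) (hW : Measurable W)
    (htail : ∀ x : ℝ, 1 < x → ℙ {ω | x < |W ω|} ≤ ENNReal.ofReal (c * x ^ (-α)))
    (l : ℝ) (hl0 : 0 < l) (hl1 : l ≤ 1) :
    ∫ ω, min (l ^ 2 * (W ω) ^ 2) (l * |W ω|) ∂ℙ
      ≤ (1 + c * (2 / (2 - α)) + c * (1 / (α - 1))) * l ^ α := by
  set K : ℝ := 1 + c * (2 / (2 - α)) + c * (1 / (α - 1)) with hK
  have h2α : (0:ℝ) < 2 - α := by linarith
  have hα1' : (0:ℝ) < α - 1 := by linarith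
  have hKpos : 0 < K := by
    have : 0 < c * (2 / (2 - α)) := by positivity
    have : 0 < c * (1 / (α - 1)) := by positivity
    positivity
  have hlα : (0:ℝ) < l ^ α := Real.rpow_pos_of_pos hl0 α
  set f : Ω → ℝ := fun ω => min (l ^ 2 * (W ω) ^ 2) (l * |W ω|) with hf
  have hf_meas : Measurable f :=
    ((hW.pow_const 2).const_mul _).min (hW.abs.const_mul _)
  have hf_nn : ∀ ω, 0 ≤ f ω := fun ω => le_min (by positivity) (by positivity)
  have step1 : ∫ ω, f ω ∂ℙ = (∫⁻ ω, ENNReal.ofReal (f ω) ∂ℙ).toReal :=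
    integral_eq_lintegral_of_nonneg_ae (Filter.Eventually.of_forall hf_nn)
      hf_meas.aestronglyMeasurable
  have step2 : ∫⁻ ω, ENNReal.ofReal (f ω) ∂ℙ = ∫⁻ t in Ioi (0:ℝ), ℙ {ω | t < f ω} :=
    lintegral_eq_lintegral_meas_lt ℙ (Filter.Eventually.of_forall hf_nn) hf_meas.aemeasurable
  have hl2 : l ^ 2 ≤ 1 := by nlinarith
  have hl2nn : (0:ℝ) ≤ l ^ 2 := by positivity
  -- pointwise bounds
  have boundB : ∀ t ∈ Ioc (l ^ 2) 1, ℙ {ω | t < f ω}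
      ≤ ENNReal.ofReal (c * l ^ α * t ^ (-(α / 2))) := by
    intro t ht
    have ht0 : 0 < t := lt_of_le_of_lt hl2nn ht.1
    have hst : l < Real.sqrt t := by
      have := Real.sqrt_lt_sqrt hl2nn ht.1
      rwa [Real.sqrt_sq hl0.le] at this
    have hx1 : 1 < Real.sqrt t / l := (one_lt_div hl0).2 hst
    have hsub : {ω | t < f ω} ⊆ {ω | Real.sqrt t / l < |W ω|} := by
      intro ω hω
      have h1 : t < l ^ 2 * (W ω) ^ 2 := lt_of_lt_of_le hω (min_le_left _ _)
      have hWpos : 0 < l * |W ω| := by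
        rcases eq_or_ne (W ω) 0 with h | h
        · exfalso; rw [h] at h1; simp at h1; linarith
        · exact mul_pos hl0 (abs_pos.2 h)
      have : t < (l * |W ω|) ^ 2 := by
        have : (l * |W ω|) ^ 2 = l ^ 2 * (W ω) ^ 2 := by
          rw [mul_pow, sq_abs]
        linarith [this ▸ h1]
      have := (Real.sqrt_lt' hWpos).2 this
      exact (div_lt_iff₀ hl0).2 (by linarith [this])
    refine (measure_mono hsub).trans ((htail _ hx1).trans (le_of_eq ?_))
    congr 1
    have : (Real.sqrt t / l) ^ (-α) = (Real.sqrt t) ^ (-α) / l ^ (-α) :=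
      Real.div_rpow (Real.sqrt_nonneg t) hl0.le _
    have e1 : (t ^ ((1:ℝ)/2)) ^ (-α) = t ^ (-(α/2)) := by
      rw [← Real.rpow_mul ht0.le]; ring_nf
    have e2 : l ^ (-α) = (l ^ α)⁻¹ := Real.rpow_neg hl0.le α
    rw [this, Real.sqrt_eq_rpow, e1, e2, div_inv_eq_mul]
    ring
  have boundC : ∀ t ∈ Ioi (1:ℝ), ℙ {ω | t < f ω}
      ≤ ENNReal.ofReal (c * l ^ α * t ^ (-α)) := by
    intro t ht
    have ht1 : (1:ℝ) < t := ht
    have ht0 : (0:ℝ) < t := by linarith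
    have hx1 : 1 < t / l := (one_lt_div hl0).2 (lt_of_le_of_lt hl1 ht1)
    have hsub : {ω | t < f ω} ⊆ {ω | t / l < |W ω|} := by
      intro ω hω
      have h1 : t < l * |W ω| := lt_of_lt_of_le hω (min_le_right _ _)
      exact (div_lt_iff₀ hl0).2 (by linarith [h1])
    refine (measure_mono hsub).trans ((htail _ hx1).trans (le_of_eq ?_))
    congr 1
    have : (t / l) ^ (-α) = t ^ (-α) / l ^ (-α) := Real.div_rpow ht0.le hl0.le _
    rw [this, Real.rpow_neg hl0.le α, div_inv_eq_mul]
    ring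
  -- integral computations
  have hibB : IntegrableOn (fun t : ℝ => c * l ^ α * t ^ (-(α/2))) (Ioc (0:ℝ) 1) := by
    have h := intervalIntegral.intervalIntegrable_rpow' (a := 0) (b := 1)
      (r := -(α/2)) (by linarith)
    rw [intervalIntegrable_iff_integrableOn_Ioc_of_le zero_le_one] at h
    exact h.const_mul _
  have hibC : IntegrableOn (fun t : ℝ => c * l ^ α * t ^ (-α)) (Ioi (1:ℝ)) :=
    (integrableOn_Ioi_rpow_of_lt (by linarith) zero_lt_one).const_mul _
  have hvalB : ∫ t in Ioc (0:ℝ) 1, c * l ^ α * t ^ (-(α/2)) = c * l ^ α * (2 / (2 - α)) := by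
    rw [MeasureTheory.integral_const_mul, ← intervalIntegral.integral_of_le zero_le_one,
      integral_rpow (Or.inl (by linarith : (-1:ℝ) < -(α/2)))]
    rw [Real.one_rpow, Real.zero_rpow (by linarith : -(α/2) + 1 ≠ 0)]
    congr 1
    rw [div_eq_div_iff (by linarith : (0:ℝ) < -(α/2) + 1).ne' (by linarith : (0:ℝ) < 2 - α).ne']
    ring
  have hvalC : ∫ t in Ioi (1:ℝ), c * l ^ α * t ^ (-α) = c * l ^ α * (1 / (α - 1)) := by
    rw [MeasureTheory.integral_const_mul, integral_Ioi_rpow_of_lt (by linarith) zero_lt_one]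
    rw [Real.one_rpow]
    congr 1
    rw [div_eq_div_iff (by linarith : -α + 1 < 0).ne (by linarith : (0:ℝ) < α - 1).ne']
    ring
  -- the lintegral bound
  have key : ∫⁻ t in Ioi (0:ℝ), ℙ {ω | t < f ω} ≤ ENNReal.ofReal (K * l ^ α) := by
    rw [← Ioc_union_Ioi_eq_Ioi (zero_le_one : (0:ℝ) ≤ 1),
      lintegral_union measurableSet_Ioi (Ioc_disjoint_Ioi le_rfl),
      ← Ioc_union_Ioc_eq_Ioc hl2nn hl2,
      lintegral_union measurableSet_Ioc (Ioc_disjoint_Ioc_of_le le_rfl)]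
    have hA : ∫⁻ t in Ioc (0:ℝ) (l ^ 2), ℙ {ω | t < f ω} ≤ ENNReal.ofReal (l ^ 2) := by
      calc ∫⁻ t in Ioc (0:ℝ) (l ^ 2), ℙ {ω | t < f ω}
          ≤ ∫⁻ _ in Ioc (0:ℝ) (l ^ 2), 1 := lintegral_mono fun t => prob_le_one
        _ = volume (Ioc (0:ℝ) (l ^ 2)) := setLIntegral_one _
        _ = ENNReal.ofReal (l ^ 2 - 0) := Real.volume_Ioc
        _ = ENNReal.ofReal (l ^ 2) := by norm_num
    have hB : ∫⁻ t in Ioc (l ^ 2) 1, ℙ {ω | t < f ω}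
        ≤ ENNReal.ofReal (c * l ^ α * (2 / (2 - α))) := by
      calc ∫⁻ t in Ioc (l ^ 2) 1, ℙ {ω | t < f ω}
          ≤ ∫⁻ t in Ioc (l ^ 2) 1, ENNReal.ofReal (c * l ^ α * t ^ (-(α/2))) :=
            setLIntegral_mono (by fun_prop) boundB
        _ ≤ ∫⁻ t in Ioc (0:ℝ) 1, ENNReal.ofReal (c * l ^ α * t ^ (-(α/2))) :=
            lintegral_mono_set (Ioc_subset_Ioc_left hl2nn)
        _ = ENNReal.ofReal (∫ t in Ioc (0:ℝ) 1, c * l ^ α * t ^ (-(α/2))) := by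
            rw [ofReal_integral_eq_lintegral_ofReal hibB]
            filter_upwards [ae_restrict_mem measurableSet_Ioc] with t ht
            have := Real.rpow_nonneg ht.1.le (-(α/2))
            positivity
        _ = ENNReal.ofReal (c * l ^ α * (2 / (2 - α))) := by rw [hvalB]
    have hC : ∫⁻ t in Ioi (1:ℝ), ℙ {ω | t < f ω}
        ≤ ENNReal.ofReal (c * l ^ α * (1 / (α - 1))) := by
      calc ∫⁻ t in Ioi (1:ℝ), ℙ {ω | t < f ω}
          ≤ ∫⁻ t in Ioi (1:ℝ), ENNReal.ofReal (c * l ^ α * t ^ (-α)) :=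
            setLIntegral_mono (by fun_prop) boundC
        _ = ENNReal.ofReal (∫ t in Ioi (1:ℝ), c * l ^ α * t ^ (-α)) := by
            rw [ofReal_integral_eq_lintegral_ofReal hibC]
            filter_upwards [ae_restrict_mem measurableSet_Ioi] with t ht
            have ht0 : (0:ℝ) < t := lt_trans zero_lt_one ht
            have := Real.rpow_nonneg ht0.le (-α)
            positivity
        _ = ENNReal.ofReal (c * l ^ α * (1 / (α - 1))) := by rw [hvalC]
    calc _ ≤ ENNReal.ofReal (l ^ 2) + ENNReal.ofReal (c * l ^ α * (2 / (2 - α)))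
            + ENNReal.ofReal (c * l ^ α * (1 / (α - 1))) := by
          exact add_le_add (add_le_add hA hB) hC
      _ = ENNReal.ofReal (l ^ 2 + c * l ^ α * (2 / (2 - α)) + c * l ^ α * (1 / (α - 1))) := by
          rw [← ENNReal.ofReal_add (by positivity) (by positivity),
            ← ENNReal.ofReal_add (by positivity) (by positivity)]
      _ ≤ ENNReal.ofReal (K * l ^ α) := by
          apply ENNReal.ofReal_le_ofReal
          have hl2α : l ^ 2 ≤ l ^ α := by
            have := Real.rpow_le_rpow_of_exponent_ge hl0 hl1 hα1.le
            rwa [show l ^ (2:ℝ) = l ^ 2 by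
              rw [show (2:ℝ) = ((2:ℕ):ℝ) by norm_num, Real.rpow_natCast]] at this
          rw [hK]; ring_nf; nlinarith [hlα]
  rw [step1, step2]
  have := ENNReal.toReal_mono ENNReal.ofReal_ne_top key
  rwa [ENNReal.toReal_ofReal (by positivity)] at this

lemma my_mgf_min_le {Ω : Type*} [MeasureSpace Ω] [IsProbabilityMeasure (ℙ : Measure Ω)]
    (c α : ℝ) (hc : 0 < c) (hα0 : 1 < α) (hα1 : α < 2)
    (W : Ω → ℝ) (hW : Measurable W) (hint : Integrable W ℙ) (hcent : ∫ ω, W ω ∂ℙ = 0)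
    (htail : ∀ x : ℝ, 1 < x → ℙ {ω | x < |W ω|} ≤ ENNReal.ofReal (c * x ^ (-α)))
    (M : ℝ) (hM : 1 ≤ M) :
    mgf (fun ω => min (W ω) M) ℙ M⁻¹
      ≤ 1 + (1 + c * (2 / (2 - α)) + c * (1 / (α - 1))) * M⁻¹ ^ α := by
  have hM0 : (0:ℝ) < M := lt_of_lt_of_le zero_lt_one hM
  set l : ℝ := M⁻¹ with hldef
  have hl0 : 0 < l := inv_pos.2 hM0
  have hl1 : l ≤ 1 := by
    rw [hldef]; exact inv_le_one_of_one_le₀ hM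
  have hlM : l * M = 1 := inv_mul_cancel₀ hM0.ne'
  set Y : Ω → ℝ := fun ω => min (W ω) M with hYdef
  have hYmeas : Measurable Y := hW.min measurable_const
  have hYint : Integrable Y ℙ := by
    refine (hint.abs.add (integrable_const M)).mono' hYmeas.aestronglyMeasurable
      (Filter.Eventually.of_forall fun ω => ?_)
    calc |Y ω| ≤ max |W ω| |M| := abs_min_le_max_abs_abs
      _ ≤ |W ω| + |M| := max_le_add_of_nonneg (abs_nonneg _) (abs_nonneg _)
      _ = |W ω| + M := by rw [abs_of_pos hM0]
  have hexp_int : Integrable (fun ω => Real.exp (l * Y ω)) ℙ := by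
    refine (integrable_const (Real.exp 1)).mono'
      ((hYmeas.const_mul l).exp.aestronglyMeasurable)
      (Filter.Eventually.of_forall fun ω => ?_)
    rw [Real.norm_eq_abs, abs_of_pos (Real.exp_pos _)]
    apply Real.exp_le_exp.2
    calc l * Y ω ≤ l * M := by
          apply mul_le_mul_of_nonneg_left (min_le_right _ _) hl0.le
      _ = 1 := hlM
  have hg_int : Integrable (fun ω => Real.exp (l * Y ω) - 1 - l * Y ω) ℙ :=
    (hexp_int.sub (integrable_const 1)).sub (hYint.const_mul l)
  have hmin_meas : Measurable (fun ω => min (l ^ 2 * (W ω) ^ 2) (l * |W ω|)) :=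
    ((hW.pow_const 2).const_mul _).min (hW.abs.const_mul _)
  have hmin_int : Integrable (fun ω => min (l ^ 2 * (W ω) ^ 2) (l * |W ω|)) ℙ := by
    refine (hint.abs.const_mul l).mono' hmin_meas.aestronglyMeasurable
      (Filter.Eventually.of_forall fun ω => ?_)
    rw [Real.norm_eq_abs, abs_of_nonneg (le_min (by positivity) (by positivity))]
    exact min_le_right _ _
  have h1 : ∫ ω, (Real.exp (l * Y ω) - 1 - l * Y ω) ∂ℙ
      ≤ ∫ ω, min (l ^ 2 * (W ω) ^ 2) (l * |W ω|) ∂ℙ :=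
    integral_mono hg_int hmin_int fun ω =>
      my_g_min_le hl0.le hM0.le hlM.le
  have h2 := my_tail_min_bound c α hc hα0 hα1 W hW htail l hl0 hl1
  have h3 : ∫ ω, Y ω ∂ℙ ≤ 0 := by
    have := integral_mono hYint hint fun ω => min_le_left (W ω) M
    rwa [hcent] at this
  have hsplit : mgf Y ℙ l = (∫ ω, (Real.exp (l * Y ω) - 1 - l * Y ω) ∂ℙ)
      + (1 + l * ∫ ω, Y ω ∂ℙ) := by
    have : mgf Y ℙ l = ∫ ω, Real.exp (l * Y ω) ∂ℙ := rfl
    rw [this]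
    have heq : (fun ω => Real.exp (l * Y ω))
        = fun ω => (Real.exp (l * Y ω) - 1 - l * Y ω) + (1 + l * Y ω) := by
      funext ω; ring
    have haux : Integrable (fun ω : Ω => 1 + l * Y ω) ℙ :=
      (integrable_const 1).add (hYint.const_mul l)
    have hsum2 : ∫ ω, (1 + l * Y ω) ∂ℙ = 1 + l * ∫ ω, Y ω ∂ℙ := by
      rw [integral_add (integrable_const 1) (hYint.const_mul l), integral_const,
        MeasureTheory.integral_const_mul]
      simp
    rw [heq, integral_add hg_int haux, hsum2]
  rw [hsplit]
  have h4 : l * ∫ ω, Y ω ∂ℙ ≤ 0 := mul_nonpos_of_nonneg_of_nonpos hl0.le h3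
  linarith [h1.trans h2]

end BigJumpsAux

/-- Big jumps principle for i.i.d. heavy-tailed variables, case `1 < α < 2`. -/
theorem big_jumps_alpha_in_one_two {Ω : Type*} [MeasureSpace Ω]
    [IsProbabilityMeasure (ℙ : Measure Ω)]
    (c α : ℝ) (hc : 0 < c) (hα0 : 1 < α) (hα1 : α < 2)
    (X : ℕ → Ω → ℝ) (hmeas : ∀ i, Measurable (X i))
    (hindep : iIndepFun X ℙ)
    (hident : ∀ i, IdentDistrib (X i) (X 0) ℙ ℙ)
    (hint : Integrable (X 0) ℙ) (hcent : ∫ ω, X 0 ω ∂ℙ = 0)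
    (htail : ∀ x : ℝ, 1 < x → ℙ {ω | x < |X 0 ω|} ≤ ENNReal.ofReal (c * x ^ (-α))) :
    ∃ C : ℝ, 0 < C ∧ ∀ (m : ℕ) (t s : ℝ), 1 ≤ m → 0 ≤ t → 1 ≤ s →
      ℙ {ω | t * (m : ℝ) ^ (1 / α) ≤
          ∑ i ∈ Finset.range m, min (X i ω) (s * (m : ℝ) ^ (1 / α))}
        ≤ ENNReal.ofReal (C * Real.exp (-t / s)) := by
  have h2α : (0:ℝ) < 2 - α := by linarith
  have hα1' : (0:ℝ) < α - 1 := by linarith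
  set K : ℝ := 1 + c * (2 / (2 - α)) + c * (1 / (α - 1)) with hKdef
  have hKpos : 0 < K := by
    have h1 : 0 < c * (2 / (2 - α)) := by positivity
    have h2 : 0 < c * (1 / (α - 1)) := by positivity
    positivity
  refine ⟨Real.exp K, Real.exp_pos K, ?_⟩
  intro m t s hm ht hs
  have hα0' : (0:ℝ) < α := by linarith
  have hm1 : (1:ℝ) ≤ (m:ℝ) := by exact_mod_cast hm
  have hm0 : (0:ℝ) < (m:ℝ) := lt_of_lt_of_le zero_lt_one hm1
  have hmα : (1:ℝ) ≤ (m:ℝ) ^ (1/α) := Real.one_le_rpow hm1 (by positivity)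
  have hmα0 : (0:ℝ) < (m:ℝ) ^ (1/α) := lt_of_lt_of_le zero_lt_one hmα
  set M : ℝ := s * (m:ℝ) ^ (1/α) with hMdef
  have hM1 : 1 ≤ M := by nlinarith
  have hM0 : 0 < M := lt_of_lt_of_le zero_lt_one hM1
  set l : ℝ := M⁻¹ with hldef
  have hl0 : 0 < l := inv_pos.2 hM0
  have hlM : l * M = 1 := inv_mul_cancel₀ hM0.ne'
  set Y : ℕ → Ω → ℝ := fun i ω => min (X i ω) M with hYdef
  have hYmeas : ∀ i, Measurable (Y i) := fun i => (hmeas i).min measurable_const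
  have hYindep : iIndepFun Y ℙ :=
    hindep.comp (fun _ x => min x M) (fun _ => measurable_id.min measurable_const)
  have hmgf_eq : ∀ i, mgf (Y i) ℙ l = mgf (Y 0) ℙ l := by
    intro i
    have hid : IdentDistrib (Y i) (Y 0) ℙ ℙ :=
      (hident i).comp (measurable_id.min measurable_const)
    have hid2 : IdentDistrib (fun ω => Real.exp (l * Y i ω))
        (fun ω => Real.exp (l * Y 0 ω)) ℙ ℙ :=
      hid.comp ((measurable_const_mul l).exp)
    exact hid2.integral_eq
  have hmgfS : mgf (∑ i ∈ Finset.range m, Y i) ℙ l = (mgf (Y 0) ℙ l) ^ m := by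
    rw [hYindep.mgf_sum hYmeas (Finset.range m)]
    rw [Finset.prod_congr rfl fun i _ => hmgf_eq i, Finset.prod_const, Finset.card_range]
  have hYb := my_mgf_min_le c α hc hα0 hα1 (X 0) (hmeas 0) hint hcent htail M hM1
  have hYb' : mgf (Y 0) ℙ l ≤ 1 + K * l ^ α := hYb
  have hmgf0nn : (0:ℝ) ≤ mgf (Y 0) ℙ l := mgf_nonneg
  have hexp1 : mgf (Y 0) ℙ l ≤ Real.exp (K * l ^ α) := by
    refine hYb'.trans ?_
    have := Real.add_one_le_exp (K * l ^ α)
    linarith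
  have hpow : (mgf (Y 0) ℙ l) ^ m ≤ Real.exp (K * l ^ α) ^ m :=
    pow_le_pow_left₀ hmgf0nn hexp1 m
  have hMα : (m:ℝ) ≤ M ^ α := by
    have h1 : ((m:ℝ) ^ (1/α)) ^ α = (m:ℝ) := by
      rw [← Real.rpow_mul hm0.le, one_div_mul_cancel hα0'.ne', Real.rpow_one]
    have h2 : M ^ α = s ^ α * ((m:ℝ) ^ (1/α)) ^ α :=
      Real.mul_rpow (by linarith) (by positivity)
    have hsα : 1 ≤ s ^ α := Real.one_le_rpow hs hα0'.le
    rw [h2, h1]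
    nlinarith
  have hmlα : (m:ℝ) * l ^ α ≤ 1 := by
    have hlα : l ^ α = (M ^ α)⁻¹ := by
      rw [hldef, Real.inv_rpow hM0.le]
    rw [hlα, ← div_eq_mul_inv]
    exact (div_le_one (Real.rpow_pos_of_pos hM0 α)).2 hMα
  have hexp2 : Real.exp (K * l ^ α) ^ m ≤ Real.exp K := by
    rw [← Real.exp_nat_mul]
    apply Real.exp_le_exp.2
    calc (m:ℝ) * (K * l ^ α) = K * ((m:ℝ) * l ^ α) := by ring
      _ ≤ K * 1 := mul_le_mul_of_nonneg_left hmlα hKpos.le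
      _ = K := mul_one K
  set S : Ω → ℝ := fun ω => ∑ i ∈ Finset.range m, Y i ω with hSdef
  have hSfun : (∑ i ∈ Finset.range m, Y i) = S := by
    funext ω; rw [hSdef]; simp [Finset.sum_apply]
  have hSmeas : Measurable S := Finset.measurable_sum _ fun i _ => hYmeas i
  have hSint : Integrable (fun ω => Real.exp (l * S ω)) ℙ := by
    refine (integrable_const (Real.exp (m:ℝ))).mono'
      ((hSmeas.const_mul l).exp.aestronglyMeasurable)
      (Filter.Eventually.of_forall fun ω => ?_)
    rw [Real.norm_eq_abs, abs_of_pos (Real.exp_pos _)]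
    apply Real.exp_le_exp.2
    have hS_le : S ω ≤ (m:ℝ) * M := by
      rw [hSdef]
      calc ∑ i ∈ Finset.range m, Y i ω ≤ ∑ _i ∈ Finset.range m, M :=
            Finset.sum_le_sum fun i _ => min_le_right _ _
        _ = (m:ℝ) * M := by rw [Finset.sum_const, Finset.card_range, nsmul_eq_mul]
    calc l * S ω ≤ l * ((m:ℝ) * M) := mul_le_mul_of_nonneg_left hS_le hl0.le
      _ = (m:ℝ) * (l * M) := by ring
      _ = (m:ℝ) := by rw [hlM, mul_one]
  have hcher := measure_ge_le_exp_mul_mgf (μ := ℙ) (X := S) (t := l)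
    (t * (m:ℝ) ^ (1/α)) hl0.le hSint
  have hεeq : l * (t * (m:ℝ) ^ (1/α)) = t / s := by
    rw [hldef, hMdef]
    have hs0 : (0:ℝ) < s := lt_of_lt_of_le zero_lt_one hs
    field_simp
  have hfinal : (ℙ {ω | t * (m:ℝ) ^ (1/α) ≤ S ω}).toReal
      ≤ Real.exp K * Real.exp (-t / s) := by
    refine hcher.trans ?_
    rw [hSfun] at hmgfS
    rw [neg_mul, hεeq, hmgfS]
    calc Real.exp (-(t/s)) * (mgf (Y 0) ℙ l) ^ m
        ≤ Real.exp (-(t/s)) * Real.exp K :=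
          mul_le_mul_of_nonneg_left (hpow.trans hexp2) (Real.exp_pos _).le
      _ = Real.exp K * Real.exp (-t / s) := by rw [neg_div]; ring
  rw [ENNReal.le_ofReal_iff_toReal_le (measure_ne_top _ _) (by positivity)]
  exact hfinal
end

section
/- Let $c>0$ and let $X_1,X_2,\dots$ be i.i.d. random variables with $\mathbb{P}(|X_1|>x)\le c x^{-1}$ for all $x>1$. Fix $\gamma>0$ and for $m\ge 1$, $s\ge 1$ set $S_m=\sum_{i=1}^m (X_i\wedge s m^{1+\gamma})$. Then there exists a constant $C>0$ such that for all $m\ge 1$, $t\ge 0$, $s\ge 1$, $\mathbb{P}(S_m\ge t m^{1+\gamma})\le C\exp(-t/s)$. -/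
open MeasureTheory ProbabilityTheory Filter

/-- Convexity bound: `exp u ≤ 1 + (e-1) * u⁺` for `u ≤ 1`. -/
lemma bj_exp_le {u : ℝ} (hu : u ≤ 1) :
    Real.exp u ≤ 1 + (Real.exp 1 - 1) * max u 0 := by
  rcases le_or_gt u 0 with h | h
  · have : Real.exp u ≤ 1 := Real.exp_le_one_iff.2 h
    have hmax : max u 0 = 0 := max_eq_right h
    rw [hmax, mul_zero, add_zero]
    exact this
  · have hc := convexOn_exp.2 (Set.mem_univ (0 : ℝ)) (Set.mem_univ (1 : ℝ))
      (by linarith : (0:ℝ) ≤ 1 - u) h.le (by ring)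
    simp only [smul_eq_mul, mul_zero, mul_one, zero_add, Real.exp_zero] at hc
    have hmax : max u 0 = u := max_eq_left h.le
    rw [hmax]
    nlinarith [hc]

/-- Expectation of truncated absolute value under a harmonic tail bound. -/
lemma bj_trunc_integral {Ω : Type*} [MeasureSpace Ω]
    [IsProbabilityMeasure (ℙ : Measure Ω)]
    {W : Ω → ℝ} (hW : Measurable W) {c : ℝ} (hc : 0 < c)
    (htail : ∀ x : ℝ, 1 < x → ℙ {ω | x < |W ω|} ≤ ENNReal.ofReal (c * x⁻¹))
    {β M : ℝ} (hβ0 : 0 < β) (hβ1 : β < 1) (hM : 1 ≤ M) :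
    ∫ ω, min |W ω| M ≤ 1 + c / (1 - β) * M ^ (1 - β) := by
  have hM0 : (0:ℝ) < M := lt_of_lt_of_le one_pos hM
  set Z : Ω → ℝ := fun ω => min |W ω| M with hZ
  have hZmeas : Measurable Z := hW.abs.min measurable_const
  have hZnn : ∀ ω, 0 ≤ Z ω := fun ω => le_min (abs_nonneg _) hM0.le
  have hZleM : ∀ ω, Z ω ≤ M := fun ω => min_le_right _ _
  have hZint : Integrable Z ℙ := by
    refine (integrable_const M).mono' hZmeas.aestronglyMeasurable
      (Filter.Eventually.of_forall fun ω => ?_)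
    rw [Real.norm_eq_abs, abs_of_nonneg (hZnn ω)]
    exact hZleM ω
  -- layer cake
  have h1 : ENNReal.ofReal (∫ ω, Z ω) = ∫⁻ t in Set.Ioi (0:ℝ), ℙ {ω | t < Z ω} := by
    rw [ofReal_integral_eq_lintegral_ofReal hZint
      (Filter.Eventually.of_forall hZnn),
      lintegral_eq_lintegral_meas_lt ℙ (Filter.Eventually.of_forall hZnn)
        hZmeas.aemeasurable]
  have hsplit : (∫⁻ t in Set.Ioi (0:ℝ), ℙ {ω | t < Z ω})
      = (∫⁻ t in Set.Ioc (0:ℝ) 1, ℙ {ω | t < Z ω})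
        + ∫⁻ t in Set.Ioi (1:ℝ), ℙ {ω | t < Z ω} := by
    rw [← Set.Ioc_union_Ioi_eq_Ioi (zero_le_one (α := ℝ)),
      lintegral_union measurableSet_Ioi Set.Ioc_disjoint_Ioi_same]
  have hterm1 : (∫⁻ t in Set.Ioc (0:ℝ) 1, ℙ {ω | t < Z ω}) ≤ 1 := by
    calc (∫⁻ t in Set.Ioc (0:ℝ) 1, ℙ {ω | t < Z ω})
        ≤ ∫⁻ _ in Set.Ioc (0:ℝ) 1, 1 := lintegral_mono fun t => prob_le_one
      _ = volume (Set.Ioc (0:ℝ) 1) := setLIntegral_one _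
      _ = 1 := by rw [Real.volume_Ioc]; norm_num
  have hsplit2 : (∫⁻ t in Set.Ioi (1:ℝ), ℙ {ω | t < Z ω})
      = (∫⁻ t in Set.Ioc (1:ℝ) M, ℙ {ω | t < Z ω})
        + ∫⁻ t in Set.Ioi M, ℙ {ω | t < Z ω} := by
    rw [← Set.Ioc_union_Ioi_eq_Ioi hM,
      lintegral_union measurableSet_Ioi Set.Ioc_disjoint_Ioi_same]
  have htermB : (∫⁻ t in Set.Ioi M, ℙ {ω | t < Z ω}) = 0 := by
    rw [setLIntegral_congr_fun measurableSet_Ioi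
      (fun t (ht : t ∈ Set.Ioi M) => ?_), lintegral_zero]
    have : {ω | t < Z ω} = (∅ : Set Ω) := by
      ext ω
      simp only [Set.mem_setOf_eq, Set.mem_empty_iff_false, iff_false, not_lt]
      exact (hZleM ω).trans (le_of_lt ht)
    rw [this, measure_empty]
  have hrint : IntegrableOn (fun t : ℝ => c * t ^ (-β)) (Set.Ioc 1 M) := by
    have h := ((intervalIntegral.intervalIntegrable_rpow' (a := 1) (b := M)
      (by linarith : (-1:ℝ) < -β)).const_mul c)
    exact h.1
  have hrnn : ∀ t ∈ Set.Ioc (1:ℝ) M, 0 ≤ c * t ^ (-β) := by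
    intro t ht
    have ht0 : (0:ℝ) < t := lt_trans one_pos ht.1
    exact mul_nonneg hc.le (Real.rpow_nonneg ht0.le _)
  have htermA : (∫⁻ t in Set.Ioc (1:ℝ) M, ℙ {ω | t < Z ω})
      ≤ ENNReal.ofReal (c / (1 - β) * M ^ (1 - β)) := by
    have hmono : (∫⁻ t in Set.Ioc (1:ℝ) M, ℙ {ω | t < Z ω})
        ≤ ∫⁻ t in Set.Ioc (1:ℝ) M, ENNReal.ofReal (c * t ^ (-β)) := by
      refine setLIntegral_mono (by fun_prop) fun t ht => ?_
      have ht1 : (1:ℝ) < t := ht.1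
      calc ℙ {ω | t < Z ω} ≤ ℙ {ω | t < |W ω|} := by
            refine measure_mono fun ω hω => ?_
            simp only [Set.mem_setOf_eq] at hω ⊢
            exact lt_of_lt_of_le hω (min_le_left _ _)
        _ ≤ ENNReal.ofReal (c * t⁻¹) := htail t ht1
        _ ≤ ENNReal.ofReal (c * t ^ (-β)) := by
            refine ENNReal.ofReal_le_ofReal (mul_le_mul_of_nonneg_left ?_ hc.le)
            rw [← Real.rpow_neg_one t]
            exact Real.rpow_le_rpow_of_exponent_le ht1.le (by linarith)
    have heval : (∫⁻ t in Set.Ioc (1:ℝ) M, ENNReal.ofReal (c * t ^ (-β)))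
        = ENNReal.ofReal (∫ t in Set.Ioc (1:ℝ) M, c * t ^ (-β)) := by
      rw [ofReal_integral_eq_lintegral_ofReal hrint
        ((ae_restrict_iff' measurableSet_Ioc).2 (Filter.Eventually.of_forall hrnn))]
    have hval : (∫ t in Set.Ioc (1:ℝ) M, c * t ^ (-β)) ≤ c / (1 - β) * M ^ (1 - β) := by
      rw [← intervalIntegral.integral_of_le hM, intervalIntegral.integral_const_mul,
        integral_rpow (Or.inl (by linarith : (-1:ℝ) < -β))]
      have h1M : (1:ℝ) ^ (-β + 1) = 1 := Real.one_rpow _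
      rw [h1M]
      have hb : -β + 1 = 1 - β := by ring
      rw [hb]
      have hMb : (0:ℝ) ≤ M ^ (1 - β) := Real.rpow_nonneg hM0.le _
      have h1β : (0:ℝ) < 1 - β := by linarith
      calc c * ((M ^ (1 - β) - 1) / (1 - β))
          ≤ c * (M ^ (1 - β) / (1 - β)) := by
            refine mul_le_mul_of_nonneg_left ?_ hc.le
            exact div_le_div_of_nonneg_right (by linarith) h1β.le
        _ = c / (1 - β) * M ^ (1 - β) := by ring
    calc (∫⁻ t in Set.Ioc (1:ℝ) M, ℙ {ω | t < Z ω})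
        ≤ ∫⁻ t in Set.Ioc (1:ℝ) M, ENNReal.ofReal (c * t ^ (-β)) := hmono
      _ = ENNReal.ofReal (∫ t in Set.Ioc (1:ℝ) M, c * t ^ (-β)) := heval
      _ ≤ ENNReal.ofReal (c / (1 - β) * M ^ (1 - β)) := ENNReal.ofReal_le_ofReal hval
  have hfinal : ENNReal.ofReal (∫ ω, Z ω)
      ≤ ENNReal.ofReal (1 + c / (1 - β) * M ^ (1 - β)) := by
    rw [h1, hsplit, hsplit2, htermB, add_zero]
    calc (∫⁻ t in Set.Ioc (0:ℝ) 1, ℙ {ω | t < Z ω})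
          + ∫⁻ t in Set.Ioc (1:ℝ) M, ℙ {ω | t < Z ω}
        ≤ 1 + ENNReal.ofReal (c / (1 - β) * M ^ (1 - β)) := add_le_add hterm1 htermA
      _ = ENNReal.ofReal (1 + c / (1 - β) * M ^ (1 - β)) := by
          rw [ENNReal.ofReal_add zero_le_one
            (mul_nonneg (div_nonneg hc.le (by linarith)) (Real.rpow_nonneg hM0.le _)),
            ENNReal.ofReal_one]
  have hnn : (0:ℝ) ≤ 1 + c / (1 - β) * M ^ (1 - β) := by
    nlinarith [mul_nonneg (div_nonneg hc.le (by linarith : (0:ℝ) ≤ 1 - β))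
      (Real.rpow_nonneg hM0.le (1 - β))]
  exact (ENNReal.ofReal_le_ofReal_iff hnn).1 hfinal

/-- Big jumps principle in the harmonic-tail case `α = 1`. -/
theorem big_jumps_harmonic {Ω : Type*} [MeasureSpace Ω]
    [IsProbabilityMeasure (ℙ : Measure Ω)]
    (c : ℝ) (hc : 0 < c) (γ : ℝ) (hγ : 0 < γ)
    (X : ℕ → Ω → ℝ) (hmeas : ∀ i, Measurable (X i))
    (hindep : iIndepFun X ℙ)
    (hident : ∀ i, IdentDistrib (X i) (X 0) ℙ ℙ)
    (htail : ∀ x : ℝ, 1 < x → ℙ {ω | x < |X 0 ω|} ≤ ENNReal.ofReal (c * x⁻¹)) :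
    ∃ C : ℝ, 0 < C ∧ ∀ (m : ℕ) (t s : ℝ), 1 ≤ m → 0 ≤ t → 1 ≤ s →
      ℙ {ω | t * (m : ℝ) ^ (1 + γ) ≤
          ∑ i ∈ Finset.range m, min (X i ω) (s * (m : ℝ) ^ (1 + γ))}
        ≤ ENNReal.ofReal (C * Real.exp (-t / s)) := by
  set β : ℝ := 1 / (1 + γ) with hβ
  have hγ1 : (0:ℝ) < 1 + γ := by linarith
  have hβ0 : 0 < β := by positivity
  have hβ1 : β < 1 := by
    rw [hβ, div_lt_one hγ1]; linarith
  set K : ℝ := (Real.exp 1 - 1) * (1 + c / (1 - β)) with hK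
  have hKnn : 0 ≤ K := by
    have h1 : (0:ℝ) ≤ Real.exp 1 - 1 := by nlinarith [Real.add_one_le_exp (1:ℝ)]
    have h2 : (0:ℝ) ≤ c / (1 - β) := div_nonneg hc.le (by linarith)
    exact mul_nonneg h1 (by linarith)
  refine ⟨Real.exp K, Real.exp_pos _, fun m t s hm ht hs => ?_⟩
  -- notation
  have hm1 : (1:ℝ) ≤ (m:ℝ) := by exact_mod_cast hm
  set p : ℝ := (m:ℝ) ^ (1 + γ) with hp
  have hp1 : (1:ℝ) ≤ p := Real.one_le_rpow hm1 hγ1.le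
  have hp0 : (0:ℝ) < p := lt_of_lt_of_le one_pos hp1
  set M : ℝ := s * p with hM
  have hM1 : (1:ℝ) ≤ M := by rw [hM]; nlinarith
  have hM0 : (0:ℝ) < M := lt_of_lt_of_le one_pos hM1
  set r : ℝ := M⁻¹ with hr
  have hr0 : (0:ℝ) ≤ r := inv_nonneg.2 hM0.le
  have hrM : r * M = 1 := inv_mul_cancel₀ hM0.ne'
  set Y : ℕ → Ω → ℝ := fun i ω => min (X i ω) M with hY
  have hYmeas : ∀ i, Measurable (Y i) := fun i => (hmeas i).min measurable_const
  have hYindep : iIndepFun Y ℙ :=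
    hindep.comp (fun _ => fun x : ℝ => min x M)
      (fun _ => measurable_id.min measurable_const)
  have hYid : ∀ i, IdentDistrib (Y i) (Y 0) ℙ ℙ := fun i =>
    (hident i).comp (measurable_id.min measurable_const)
  have hYleM : ∀ i ω, Y i ω ≤ M := fun i ω => min_le_right _ _
  have huone : ∀ i ω, r * Y i ω ≤ 1 := by
    intro i ω
    calc r * Y i ω ≤ r * M := mul_le_mul_of_nonneg_left (hYleM i ω) hr0
      _ = 1 := hrM
  have hint : ∀ i, Integrable (fun ω => Real.exp (r * Y i ω)) ℙ := by
    intro i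
    refine (integrable_const (Real.exp 1)).mono'
      (((hYmeas i).const_mul r).exp.aestronglyMeasurable)
      (Filter.Eventually.of_forall fun ω => ?_)
    rw [Real.norm_eq_abs, Real.abs_exp]
    exact Real.exp_le_exp.2 (huone i ω)
  -- truncated variable
  set Z : Ω → ℝ := fun ω => min |X 0 ω| M with hZ
  have hZmeas : Measurable Z := (hmeas 0).abs.min measurable_const
  have hZnn : ∀ ω, 0 ≤ Z ω := fun ω => le_min (abs_nonneg _) hM0.le
  have hZint : Integrable Z ℙ := by
    refine (integrable_const M).mono' hZmeas.aestronglyMeasurable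
      (Filter.Eventually.of_forall fun ω => ?_)
    rw [Real.norm_eq_abs, abs_of_nonneg (hZnn ω)]
    exact min_le_right _ _
  have hZbound : ∫ ω, Z ω ≤ 1 + c / (1 - β) * M ^ (1 - β) :=
    bj_trunc_integral (hmeas 0) hc htail hβ0 hβ1 hM1
  set E : ℝ := 1 + c / (1 - β) * M ^ (1 - β) with hE
  have he1 : (0:ℝ) ≤ Real.exp 1 - 1 := by nlinarith [Real.add_one_le_exp (1:ℝ)]
  have hEnn : (0:ℝ) ≤ E := by
    have := mul_nonneg (div_nonneg hc.le (by linarith : (0:ℝ) ≤ 1 - β))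
      (Real.rpow_nonneg hM0.le (1 - β))
    rw [hE]; linarith
  set a : ℝ := (Real.exp 1 - 1) * r * E with ha
  have hann : 0 ≤ a := mul_nonneg (mul_nonneg he1 hr0) hEnn
  -- mgf bound for a single variable
  have hmgf0 : mgf (Y 0) ℙ r ≤ 1 + a := by
    have hpoint : ∀ ω, Real.exp (r * Y 0 ω) ≤ 1 + ((Real.exp 1 - 1) * r) * Z ω := by
      intro ω
      have h1 := bj_exp_le (huone 0 ω)
      have h2 : max (r * Y 0 ω) 0 ≤ r * Z ω := by
        refine max_le (mul_le_mul_of_nonneg_left ?_ hr0) (mul_nonneg hr0 (hZnn ω))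
        exact min_le_min (le_abs_self _) le_rfl
      calc Real.exp (r * Y 0 ω) ≤ 1 + (Real.exp 1 - 1) * max (r * Y 0 ω) 0 := h1
        _ ≤ 1 + (Real.exp 1 - 1) * (r * Z ω) := by
            exact add_le_add_right (mul_le_mul_of_nonneg_left h2 he1) 1
        _ = 1 + ((Real.exp 1 - 1) * r) * Z ω := by ring
    have hRint : Integrable (fun ω => 1 + ((Real.exp 1 - 1) * r) * Z ω) ℙ :=
      (integrable_const 1).add (hZint.const_mul _)
    have hI : mgf (Y 0) ℙ r ≤ ∫ ω, (1 + ((Real.exp 1 - 1) * r) * Z ω) :=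
      integral_mono (hint 0) hRint hpoint
    have hIeq : (∫ ω, (1 + ((Real.exp 1 - 1) * r) * Z ω))
        = 1 + ((Real.exp 1 - 1) * r) * ∫ ω, Z ω := by
      rw [integral_add (integrable_const 1) (hZint.const_mul _), integral_const,
        integral_const_mul]
      simp [measure_univ]
    rw [hIeq] at hI
    calc mgf (Y 0) ℙ r ≤ 1 + ((Real.exp 1 - 1) * r) * ∫ ω, Z ω := hI
      _ ≤ 1 + ((Real.exp 1 - 1) * r) * E := by
          have h := mul_le_mul_of_nonneg_left hZbound (mul_nonneg he1 hr0)
          linarith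
      _ = 1 + a := by rw [ha]
  have hmgfnn : 0 ≤ mgf (Y 0) ℙ r := mgf_nonneg
  -- key numeric bound : m * a ≤ K
  have hmleM : (m:ℝ) ≤ M := by
    have h1 : (m:ℝ) ≤ p := by
      nth_rewrite 1 [← Real.rpow_one (m:ℝ)]
      exact Real.rpow_le_rpow_of_exponent_le hm1 (by linarith)
    calc (m:ℝ) ≤ p := h1
      _ ≤ M := le_mul_of_one_le_left hp0.le hs
  have hmleMβ : (m:ℝ) ≤ M ^ β := by
    have hpβ : p ^ β = (m:ℝ) := by
      rw [hp, ← Real.rpow_mul (by positivity : (0:ℝ) ≤ (m:ℝ))]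
      rw [show (1 + γ) * β = 1 by rw [hβ]; field_simp]
      exact Real.rpow_one _
    have h2 : p ^ β ≤ M ^ β :=
      Real.rpow_le_rpow hp0.le (le_mul_of_one_le_left hp0.le hs) hβ0.le
    rw [← hpβ]; exact h2
  have hMβ0 : (0:ℝ) < M ^ β := Real.rpow_pos_of_pos hM0 _
  have hma : (m:ℝ) * a ≤ K := by
    have e1 : (m:ℝ) * r ≤ 1 := by
      rw [hr, ← div_eq_mul_inv]
      exact (div_le_one hM0).2 hmleM
    have e2 : (m:ℝ) * (M ^ (1 - β) * r) ≤ 1 := by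
      have heq : M ^ (1 - β) * r = (M ^ β)⁻¹ := by
        rw [hr, ← Real.rpow_neg_one M, ← Real.rpow_add hM0, ← Real.rpow_neg hM0.le]
        congr 1; ring
      rw [heq, ← div_eq_mul_inv]
      exact (div_le_one hMβ0).2 hmleMβ
    have expand : (m:ℝ) * a
        = (Real.exp 1 - 1) * ((m:ℝ) * r + c / (1 - β) * ((m:ℝ) * (M ^ (1 - β) * r))) := by
      rw [ha, hE]; ring
    rw [expand, hK]
    have hc' : (0:ℝ) ≤ c / (1 - β) := div_nonneg hc.le (by linarith)
    refine mul_le_mul_of_nonneg_left ?_ he1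
    exact add_le_add e1 (by calc c / (1 - β) * ((m:ℝ) * (M ^ (1 - β) * r))
          ≤ c / (1 - β) * 1 := mul_le_mul_of_nonneg_left e2 hc'
      _ = c / (1 - β) := mul_one _)
  have hprod : (mgf (Y 0) ℙ r) ^ m ≤ Real.exp K := by
    calc (mgf (Y 0) ℙ r) ^ m ≤ (1 + a) ^ m := pow_le_pow_left₀ hmgfnn hmgf0 m
      _ ≤ (Real.exp a) ^ m := pow_le_pow_left₀ (by linarith)
          (by linarith [Real.add_one_le_exp a]) m
      _ = Real.exp ((m : ℕ) * a) := (Real.exp_nat_mul a m).symm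
      _ ≤ Real.exp K := Real.exp_le_exp.2 hma
  -- Chernoff bound
  set F : Ω → ℝ := ∑ i ∈ Finset.range m, Y i with hF
  have hFint : Integrable (fun ω => Real.exp (r * F ω)) ℙ :=
    hYindep.integrable_exp_mul_sum hYmeas (fun i _ => hint i)
  have hchern := measure_ge_le_exp_mul_mgf (μ := ℙ) (X := F) (t := r) (t * p) hr0 hFint
  have hmgfF : mgf F ℙ r = (mgf (Y 0) ℙ r) ^ m := by
    rw [hF, hYindep.mgf_sum hYmeas]
    have hcong : ∀ i ∈ Finset.range m, mgf (Y i) ℙ r = mgf (Y 0) ℙ r := fun i _ =>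
      ((hYid i).comp ((measurable_id.const_mul r).exp)).integral_eq
    rw [Finset.prod_congr rfl hcong, Finset.prod_const, Finset.card_range]
  have hs0 : (0:ℝ) < s := lt_of_lt_of_le one_pos hs
  have hexp : -r * (t * p) = -t / s := by
    rw [hr, hM]
    field_simp
  have hset : {ω | t * p ≤ ∑ i ∈ Finset.range m, min (X i ω) M}
      = {ω | t * p ≤ F ω} := by
    ext ω
    simp [hF, hY, Finset.sum_apply]
  refine le_trans (le_of_eq (congrArg ℙ hset)) ?_
  refine (ENNReal.le_ofReal_iff_toReal_le (measure_ne_top _ _) (by positivity)).2 ?_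
  calc (ℙ {ω | t * p ≤ F ω}).toReal
      ≤ Real.exp (-r * (t * p)) * mgf F ℙ r := hchern
    _ = Real.exp (-t / s) * (mgf (Y 0) ℙ r) ^ m := by rw [hexp, hmgfF]
    _ ≤ Real.exp (-t / s) * Real.exp K :=
        mul_le_mul_of_nonneg_left hprod (Real.exp_nonneg _)
    _ = Real.exp K * Real.exp (-t / s) := mul_comm _ _
end

section
/- For any integer $N\ge 3$, the function $\operatorname{LCS}_N$ is upper semi-continuous on the space of pairs of compact real trees equipped with the Gromov–Hausdorff topology: if $T^n\to T$ and $S^n\to S$ in Gromov–Hausdorff distance, then $\limsup_{n\to\infty}\operatorname{LCS}_N(T^n,S^n)\le \operatorname{LCS}_N(T,S)$. -/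
/-- The geodesic segment between two points of a (real) tree, characterized
metrically. -/
def geo {X : Type*} [MetricSpace X] (x y : X) : Set X :=
  {w | dist x w + dist w y = dist x y}

/-- A metric space is a real tree if any two points are joined by a unique
isometric arc, and every injective continuous path has the geodesic as image. -/
def IsRealTree (X : Type*) [MetricSpace X] : Prop :=
  (∀ x y : X,
    ∃! g : Set.Icc (0 : ℝ) (dist x y) → X,
      (∀ a b : Set.Icc (0 : ℝ) (dist x y), dist (g a) (g b) = |(a : ℝ) - (b : ℝ)|) ∧
      g ⟨0, Set.left_mem_Icc.mpr dist_nonneg⟩ = x ∧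
      g ⟨dist x y, Set.right_mem_Icc.mpr dist_nonneg⟩ = y) ∧
  (∀ f : Set.Icc (0 : ℝ) 1 → X, Continuous f → Function.Injective f →
      Set.range f =
        geo (f ⟨0, Set.left_mem_Icc.mpr zero_le_one⟩)
            (f ⟨1, Set.right_mem_Icc.mpr zero_le_one⟩))

/-- The subtree of a real tree spanned by a list of points. -/
def spanSet {X : Type*} [MetricSpace X] (xs : List X) : Set X :=
  {w | ∃ p ∈ xs, ∃ q ∈ xs, w ∈ geo p q}

/-- Total length of the spanned subtree, defined recursively. -/
noncomputable def lenSpan {X : Type*} [MetricSpace X] : List X → ℝ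
  | [] => 0
  | x :: xs => Metric.infDist x (spanSet xs) + lenSpan xs

/-- The maximal total length of a common subtree with at most `N` leaves:
the supremum over `N`-tuples in each tree with equal pairwise distances of the
length of the tree spanned in the first factor. -/
noncomputable def LCSN (N : ℕ) (A B : Type*) [MetricSpace A] [MetricSpace B] : ℝ :=
  sSup {r : ℝ | ∃ (x : Fin N → A) (y : Fin N → B),
    (∀ i j, dist (x i) (x j) = dist (y i) (y j)) ∧
    r = lenSpan ((List.ofFn x).reverse)}

section AuxLemmas

open Metric Set

lemma concat_mem_geo {X : Type*} [MetricSpace X]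
    (tree2 : ∀ f : Set.Icc (0:ℝ) 1 → X, Continuous f → Function.Injective f →
      Set.range f = geo (f ⟨0, Set.left_mem_Icc.mpr zero_le_one⟩)
        (f ⟨1, Set.right_mem_Icc.mpr zero_le_one⟩))
    {A D : ℝ} (hA0 : 0 ≤ A) (hD0 : 0 ≤ D)
    (f : Set.Icc (0:ℝ) A → X) (g : Set.Icc (0:ℝ) D → X)
    (hfinj : Function.Injective f) (hginj : Function.Injective g)
    (hfc : Continuous f) (hgc : Continuous g)
    {α s' : ℝ} (hα0 : 0 ≤ α) (hαA : α ≤ A) (hs0 : 0 ≤ s') (hsD : s' ≤ D)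
    (hjoin : f ⟨α, ⟨hα0, hαA⟩⟩ = g ⟨s', ⟨hs0, hsD⟩⟩)
    (hL : 0 < α + (D - s'))
    (hcross : ∀ (r : ℝ) (hr : r ∈ Set.Icc (0:ℝ) A) (s : ℝ) (hs : s ∈ Set.Icc (0:ℝ) D),
        s' < s → f ⟨r, hr⟩ ≠ g ⟨s, hs⟩) :
    g ⟨s', ⟨hs0, hsD⟩⟩ ∈ geo (f ⟨0, ⟨le_rfl, hA0⟩⟩) (g ⟨D, ⟨hD0, le_rfl⟩⟩) := by
  set L := α + (D - s') with hLdef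
  set F : ℝ → X := fun r =>
    if r ≤ α then f (Set.projIcc 0 A hA0 r)
    else g (Set.projIcc 0 D hD0 (s' + (r - α))) with hFdef
  have hF1 : ∀ (r : ℝ) (h0 : 0 ≤ r) (h1 : r ≤ α), F r = f ⟨r, ⟨h0, le_trans h1 hαA⟩⟩ := by
    intro r h0 h1
    simp only [hFdef, if_pos h1]
    rw [Set.projIcc_of_mem hA0 ⟨h0, le_trans h1 hαA⟩]
  have hF2 : ∀ (r : ℝ) (h1 : α < r) (h2 : r ≤ L),
      F r = g ⟨s' + (r - α), ⟨by linarith, by rw [hLdef] at h2; linarith⟩⟩ := by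
    intro r h1 h2
    simp only [hFdef, if_neg (not_le.2 h1)]
    rw [Set.projIcc_of_mem hD0 ⟨by linarith, by rw [hLdef] at h2; linarith⟩]
  have hFc : Continuous F := by
    refine Continuous.if_le (hfc.comp continuous_projIcc)
      ((hgc.comp continuous_projIcc).comp
        (continuous_const.add (continuous_id.sub continuous_const)))
      continuous_id continuous_const ?_
    intro r hr
    subst hr
    show f (Set.projIcc 0 A hA0 r) = g (Set.projIcc 0 D hD0 (s' + (r - r)))
    rw [show s' + (r - r) = s' by ring, Set.projIcc_of_mem hA0 ⟨hα0, hαA⟩,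
      Set.projIcc_of_mem hD0 ⟨hs0, hsD⟩]
    exact hjoin
  set h : Set.Icc (0:ℝ) 1 → X := fun θ => F (θ.1 * L) with hhdef
  have hhc : Continuous h := hFc.comp (continuous_subtype_val.mul continuous_const)
  have hr_mem : ∀ θ : Set.Icc (0:ℝ) 1, 0 ≤ θ.1 * L ∧ θ.1 * L ≤ L := by
    intro θ
    constructor
    · exact mul_nonneg θ.2.1 hL.le
    · nlinarith [θ.2.2, θ.2.1, hL]
  have hinj : Function.Injective h := by
    intro θ₁ θ₂ heq
    have h1 := hr_mem θ₁
    have h2 := hr_mem θ₂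
    simp only [hhdef] at heq
    have hcancel : θ₁.1 * L = θ₂.1 * L → θ₁ = θ₂ := fun hrr =>
      Subtype.ext (mul_right_cancel₀ (ne_of_gt hL) hrr)
    by_cases c₁ : θ₁.1 * L ≤ α <;> by_cases c₂ : θ₂.1 * L ≤ α
    · rw [hF1 _ h1.1 c₁, hF1 _ h2.1 c₂] at heq
      exact hcancel (congrArg Subtype.val (hfinj heq))
    · exfalso
      push_neg at c₂
      rw [hF1 _ h1.1 c₁, hF2 _ c₂ h2.2] at heq
      exact hcross _ _ _ _ (by linarith) heq
    · exfalso
      push_neg at c₁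
      rw [hF2 _ c₁ h1.2, hF1 _ h2.1 c₂] at heq
      exact hcross _ _ _ _ (by linarith) heq.symm
    · push_neg at c₁ c₂
      rw [hF2 _ c₁ h1.2, hF2 _ c₂ h2.2] at heq
      have := congrArg Subtype.val (hginj heq)
      simp only at this
      exact hcancel (by linarith)
  have hh0 : h ⟨0, Set.left_mem_Icc.mpr zero_le_one⟩ = f ⟨0, ⟨le_rfl, hA0⟩⟩ := by
    simp only [hhdef]
    rw [show (0:ℝ) * L = 0 by ring, hF1 0 le_rfl hα0]
  have hh1 : h ⟨1, Set.right_mem_Icc.mpr zero_le_one⟩ = g ⟨D, ⟨hD0, le_rfl⟩⟩ := by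
    simp only [hhdef]
    rw [one_mul]
    by_cases hc : L ≤ α
    · have hβ0 : D - s' = 0 := by linarith [hLdef.ge, hLdef.le]
      have hLα : L = α := by linarith [hLdef.ge, hLdef.le]
      rw [hF1 L (by linarith) hc]
      have e1 : (⟨L, ⟨by linarith, le_trans hc hαA⟩⟩ : Set.Icc (0:ℝ) A)
          = ⟨α, ⟨hα0, hαA⟩⟩ := Subtype.ext hLα
      rw [e1, hjoin]
      congr 1
      exact Subtype.ext (by linarith)
    · push_neg at hc
      rw [hF2 L hc le_rfl]
      congr 1
      refine Subtype.ext ?_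
      show s' + (L - α) = D
      rw [hLdef]; ring
  have hrange := tree2 h hhc hinj
  rw [hh0, hh1] at hrange
  have hmem : g ⟨s', ⟨hs0, hsD⟩⟩ ∈ Set.range h := by
    refine ⟨⟨α / L, ⟨div_nonneg hα0 hL.le, by rw [div_le_one hL, hLdef]; linarith⟩⟩, ?_⟩
    simp only [hhdef]
    rw [div_mul_cancel₀ _ (ne_of_gt hL), hF1 α hα0 le_rfl]
    exact hjoin
  rw [hrange] at hmem
  exact hmem

lemma exists_median {X : Type*} [MetricSpace X] (hX : IsRealTree X) (a u v : X) :
    ∃ m ∈ geo u v, dist a m = (dist a u + dist a v - dist u v) / 2 := by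
  obtain ⟨f, ⟨hfiso, hf0, hfA⟩, -⟩ := hX.1 a u
  obtain ⟨g, ⟨hgiso, hg0, hgD⟩, -⟩ := hX.1 u v
  have hfc : Continuous f := by
    refine (LipschitzWith.of_dist_le_mul (K := 1) fun s t => ?_).continuous
    rw [hfiso, Subtype.dist_eq, Real.dist_eq]; norm_num
  have hgc : Continuous g := by
    refine (LipschitzWith.of_dist_le_mul (K := 1) fun s t => ?_).continuous
    rw [hgiso, Subtype.dist_eq, Real.dist_eq]; norm_num
  have hfinj : Function.Injective f := by
    intro s t h
    have h2 := hfiso s t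
    rw [h, dist_self] at h2
    have h3 : (s : ℝ) - t = 0 := abs_eq_zero.1 h2.symm
    exact Subtype.ext (by linarith)
  have hginj : Function.Injective g := by
    intro s t h
    have h2 := hgiso s t
    rw [h, dist_self] at h2
    have h3 : (s : ℝ) - t = 0 := abs_eq_zero.1 h2.symm
    exact Subtype.ext (by linarith)
  have hfa : ∀ t : Set.Icc (0:ℝ) (dist a u), dist a (f t) = t := by
    intro t
    conv_lhs => rw [← hf0]
    rw [hfiso, zero_sub, abs_neg, abs_of_nonneg t.2.1]
  have hfu : ∀ t : Set.Icc (0:ℝ) (dist a u), dist (f t) u = dist a u - t := by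
    intro t
    conv_lhs => rw [← hfA]
    rw [hfiso, abs_of_nonpos (by linarith [t.2.2])]
    ring
  have hgu : ∀ s : Set.Icc (0:ℝ) (dist u v), dist u (g s) = s := by
    intro s
    conv_lhs => rw [← hg0]
    rw [hgiso, zero_sub, abs_neg, abs_of_nonneg s.2.1]
  have hgv : ∀ s : Set.Icc (0:ℝ) (dist u v), dist (g s) v = dist u v - s := by
    intro s
    conv_lhs => rw [← hgD]
    rw [hgiso, abs_of_nonpos (by linarith [s.2.2])]
    ring
  set SS : Set ℝ := {s : ℝ | ∃ hs : s ∈ Set.Icc (0:ℝ) (dist u v), g ⟨s, hs⟩ ∈ Set.range f}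
    with hSSdef
  have hAmem : dist a u ∈ Set.Icc (0:ℝ) (dist a u) := Set.right_mem_Icc.2 dist_nonneg
  have h0S : (0:ℝ) ∈ SS := by
    refine ⟨Set.left_mem_Icc.2 dist_nonneg, ⟨⟨dist a u, hAmem⟩, ?_⟩⟩
    have h1 : f ⟨dist a u, hAmem⟩ = u := hfA
    have h2 : g ⟨0, Set.left_mem_Icc.2 dist_nonneg⟩ = u := hg0
    rw [h1, h2]
  have hSbdd : BddAbove SS := by
    refine ⟨dist u v, fun s hs => ?_⟩
    obtain ⟨h, -⟩ := hs
    exact h.2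
  haveI : CompactSpace (Set.Icc (0:ℝ) (dist a u)) := isCompact_iff_compactSpace.mp isCompact_Icc
  haveI : CompactSpace (Set.Icc (0:ℝ) (dist u v)) := isCompact_iff_compactSpace.mp isCompact_Icc
  have hK : IsClosed (g ⁻¹' (Set.range f)) := (isCompact_range hfc).isClosed.preimage hgc
  have hSK : SS = Subtype.val '' (g ⁻¹' (Set.range f)) := by
    ext s
    constructor
    · rintro ⟨hs, hr⟩
      exact ⟨⟨s, hs⟩, hr, rfl⟩
    · rintro ⟨⟨r, hr⟩, hrK, rfl⟩
      exact ⟨hr, hrK⟩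
  have hScomp : IsCompact SS := by
    rw [hSK]
    exact hK.isCompact.image continuous_subtype_val
  have hsS : sSup SS ∈ SS := hScomp.sSup_mem ⟨0, h0S⟩
  set s' := sSup SS with hs'def
  obtain ⟨hsmem, t, htm⟩ := hsS
  have dum : dist u (g ⟨s', hsmem⟩) = s' := hgu _
  have dmv : dist (g ⟨s', hsmem⟩) v = dist u v - s' := hgv _
  have dam : dist a (g ⟨s', hsmem⟩) = t := by rw [← htm]; exact hfa t
  have ht1 : (t : ℝ) = dist a u - s' := by
    have h1 : dist (f t) u = dist a u - t := hfu t
    rw [htm] at h1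
    rw [dist_comm] at dum
    linarith
  have dam' : dist a (g ⟨s', hsmem⟩) = dist a u - s' := by rw [dam, ht1]
  have hα : 0 ≤ dist a u - s' := by rw [← ht1]; exact t.2.1
  have hβ : 0 ≤ dist u v - s' := by linarith [hsmem.2]
  have hs0 : (0:ℝ) ≤ s' := hsmem.1
  have claim : dist a v = (dist a u - s') + (dist u v - s') := by
    rcases eq_or_lt_of_le (add_nonneg hα hβ) with hL | hL
    · have h1 : dist a u - s' = 0 := by linarith
      have h2 : dist u v - s' = 0 := by linarith
      have ha : a = g ⟨s', hsmem⟩ := by rw [← dist_eq_zero, dam', h1]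
      have hv : g ⟨s', hsmem⟩ = v := by rw [← dist_eq_zero, dmv, h2]
      have h3 := dist_triangle a (g ⟨s', hsmem⟩) v
      have h4 : (0:ℝ) ≤ dist a v := dist_nonneg
      linarith
    · have hjoin : f ⟨dist a u - s', ⟨hα, by linarith⟩⟩ = g ⟨s', ⟨hs0, hsmem.2⟩⟩ := by
        have e1 : (⟨dist a u - s', ⟨hα, by linarith⟩⟩ : Set.Icc (0:ℝ) (dist a u)) = t :=
          Subtype.ext ht1.symm
        rw [e1, htm]
      have hcross : ∀ (r : ℝ) (hr : r ∈ Set.Icc (0:ℝ) (dist a u)) (s : ℝ)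
          (hs : s ∈ Set.Icc (0:ℝ) (dist u v)), s' < s → f ⟨r, hr⟩ ≠ g ⟨s, hs⟩ := by
        intro r hr s hs hlt heq
        have hmemS : s ∈ SS := ⟨hs, ⟨⟨r, hr⟩, heq⟩⟩
        have := le_csSup hSbdd hmemS
        rw [← hs'def] at this
        linarith
      have hmem := concat_mem_geo hX.2 dist_nonneg dist_nonneg f g hfinj hginj hfc hgc
        hα (by linarith) hs0 hsmem.2 hjoin hL hcross
      rw [hf0, hgD] at hmem
      have heq : dist a (g ⟨s', ⟨hs0, hsmem.2⟩⟩) + dist (g ⟨s', ⟨hs0, hsmem.2⟩⟩) v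
          = dist a v := hmem
      have e2 : (⟨s', ⟨hs0, hsmem.2⟩⟩ : Set.Icc (0:ℝ) (dist u v)) = ⟨s', hsmem⟩ := rfl
      rw [e2] at heq
      rw [dam', dmv] at heq
      linarith
  refine ⟨g ⟨s', hsmem⟩, ?_, ?_⟩
  · show dist u (g ⟨s', hsmem⟩) + dist (g ⟨s', hsmem⟩) v = dist u v
    rw [dum, dmv]; ring
  · rw [dam', claim]; ring


-- ## span set basics

lemma left_mem_geo {X : Type*} [MetricSpace X] (x y : X) : x ∈ geo x y := by simp [geo]

lemma mem_spanSet_self {X : Type*} [MetricSpace X] {p : X} {xs : List X} (hp : p ∈ xs) :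
    p ∈ spanSet xs := ⟨p, hp, p, hp, left_mem_geo p p⟩

lemma spanSet_nil {X : Type*} [MetricSpace X] : spanSet ([] : List X) = ∅ := by
  simp [spanSet]

lemma exists_partner {α β : Type*} {xs : List α} {ys : List β}
    (hlen : xs.length = ys.length) {p : β} (hp : p ∈ ys) :
    ∃ u, (u, p) ∈ xs.zip ys := by
  obtain ⟨i, hi, rfl⟩ := List.mem_iff_getElem.1 hp
  refine ⟨xs[i]'(by omega), ?_⟩
  have h2 : i < (xs.zip ys).length := by
    rw [List.length_zip]; omega
  have h1 : (xs.zip ys)[i]'h2 = (xs[i]'(by omega), ys[i]'hi) := List.getElem_zip ..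
  rw [← h1]
  exact List.getElem_mem h2

-- ## comparison of spanned lengths between two trees

lemma infDist_span_le {X Y : Type*} [MetricSpace X] [MetricSpace Y] (hX : IsRealTree X)
    (a : X) (b : Y) (xs : List X) (ys : List Y) (hlen : xs.length = ys.length) {ε : ℝ}
    (hε : 0 ≤ ε)
    (hpair : ∀ p ∈ (a :: xs).zip (b :: ys), ∀ q ∈ (a :: xs).zip (b :: ys),
      |dist p.1 q.1 - dist p.2 q.2| ≤ ε) :
    Metric.infDist a (spanSet xs) ≤ Metric.infDist b (spanSet ys) + 2 * ε := by
  cases xs with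
  | nil =>
    have hys : ys = [] := List.length_eq_zero_iff.1 hlen.symm
    subst hys
    simp only [spanSet_nil, Metric.infDist_empty]
    linarith
  | cons x xs' =>
    cases ys with
    | nil => simp at hlen
    | cons y ys' =>
      have hSy : (spanSet (y :: ys')).Nonempty :=
        ⟨y, mem_spanSet_self (List.mem_cons_self)⟩
      have key : ∀ η : ℝ, 0 < η →
          Metric.infDist a (spanSet (x :: xs')) ≤
            Metric.infDist b (spanSet (y :: ys')) + 2 * ε + η := by
        intro η hη
        obtain ⟨w, hw, hwlt⟩ := (Metric.infDist_lt_iff hSy).1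
          (lt_add_of_pos_right (Metric.infDist b (spanSet (y :: ys'))) hη)
        obtain ⟨p, hp, q, hq, hwpq⟩ := hw
        obtain ⟨u, hu⟩ := exists_partner (xs := x :: xs') (by simpa using hlen) hp
        obtain ⟨v', hv⟩ := exists_partner (xs := x :: xs') (by simpa using hlen) hq
        obtain ⟨m, hm, hdm⟩ := exists_median hX a u v'
        have hmspan : m ∈ spanSet (x :: xs') :=
          ⟨u, (List.of_mem_zip hu).1, v', (List.of_mem_zip hv).1, hm⟩
        have h1 : Metric.infDist a (spanSet (x :: xs')) ≤ dist a m :=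
          Metric.infDist_le_dist_of_mem hmspan
        have hmem0 : (a, b) ∈ (a :: x :: xs').zip (b :: y :: ys') := by
          rw [List.zip_cons_cons]; exact List.mem_cons_self
        have hmemU : (u, p) ∈ (a :: x :: xs').zip (b :: y :: ys') := by
          rw [List.zip_cons_cons]; exact List.mem_cons_of_mem _ hu
        have hmemV : (v', q) ∈ (a :: x :: xs').zip (b :: y :: ys') := by
          rw [List.zip_cons_cons]; exact List.mem_cons_of_mem _ hv
        have e1 := abs_le.1 (hpair _ hmem0 _ hmemU)
        have e2 := abs_le.1 (hpair _ hmem0 _ hmemV)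
        have e3 := abs_le.1 (hpair _ hmemU _ hmemV)
        simp only at e1 e2 e3
        have t1 : dist b p ≤ dist b w + dist w p := dist_triangle b w p
        have t2 : dist b q ≤ dist b w + dist w q := dist_triangle b w q
        have hgeo : dist p w + dist w q = dist p q := hwpq
        have hwp : dist w p = dist p w := dist_comm w p
        linarith
      by_contra hcon
      push_neg at hcon
      have h2 := key ((Metric.infDist a (spanSet (x :: xs')) -
        (Metric.infDist b (spanSet (y :: ys')) + 2 * ε)) / 2) (by linarith)
      linarith

lemma lenSpan_le_lenSpan {X Y : Type*} [MetricSpace X] [MetricSpace Y] (hX : IsRealTree X)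
    (xs : List X) : ∀ (ys : List Y), xs.length = ys.length → ∀ {ε : ℝ}, 0 ≤ ε →
    (∀ p ∈ xs.zip ys, ∀ q ∈ xs.zip ys, |dist p.1 q.1 - dist p.2 q.2| ≤ ε) →
    lenSpan xs ≤ lenSpan ys + 2 * xs.length * ε := by
  induction xs with
  | nil =>
    intro ys hlen ε hε hp
    have hys : ys = [] := List.length_eq_zero_iff.1 hlen.symm
    subst hys
    simp [lenSpan]
  | cons x xs ih =>
    intro ys hlen ε hε hp
    cases ys with
    | nil => simp at hlen
    | cons y ys =>
      have h1 := infDist_span_le hX x y xs ys (by simpa using hlen) hε hp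
      have h2 := ih ys (by simpa using hlen) hε (fun p hp' q hq' =>
        hp p (by rw [List.zip_cons_cons]; exact List.mem_cons_of_mem _ hp')
           q (by rw [List.zip_cons_cons]; exact List.mem_cons_of_mem _ hq'))
      show Metric.infDist x (spanSet xs) + lenSpan xs ≤
        (Metric.infDist y (spanSet ys) + lenSpan ys) + 2 * (x :: xs).length * ε
      have hcast : ((x :: xs).length : ℝ) = (xs.length : ℝ) + 1 := by
        simp [List.length_cons]
      rw [hcast]
      nlinarith [h1, h2, hε]

lemma lenSpan_ofFn_le {X Y : Type*} [MetricSpace X] [MetricSpace Y] (hX : IsRealTree X)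
    {N : ℕ} (x : Fin N → X) (y : Fin N → Y) {ε : ℝ} (hε : 0 ≤ ε)
    (h : ∀ i j, |dist (x i) (x j) - dist (y i) (y j)| ≤ ε) :
    lenSpan ((List.ofFn x).reverse) ≤ lenSpan ((List.ofFn y).reverse) + 2 * N * ε := by
  have hmem : ∀ p ∈ ((List.ofFn x).reverse).zip ((List.ofFn y).reverse),
      ∃ i, p = (x i, y i) := by
    intro p hp
    obtain ⟨k, hk, hpk⟩ := List.mem_iff_getElem.1 hp
    have hk' : k < N := by
      rw [List.length_zip] at hk
      simpa using hk
    refine ⟨⟨N - 1 - k, by omega⟩, ?_⟩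
    rw [List.getElem_zip] at hpk
    rw [← hpk]
    have e1 : ((List.ofFn x).reverse)[k]'(by simpa using hk') = x ⟨N - 1 - k, by omega⟩ := by
      rw [List.getElem_reverse]
      rw [List.getElem_ofFn]
      congr 1
      ext
      simp
    have e2 : ((List.ofFn y).reverse)[k]'(by simpa using hk') = y ⟨N - 1 - k, by omega⟩ := by
      rw [List.getElem_reverse]
      rw [List.getElem_ofFn]
      congr 1
      ext
      simp
    rw [e1, e2]
  have hlen : ((List.ofFn x).reverse).length = ((List.ofFn y).reverse).length := by simp
  have := lenSpan_le_lenSpan hX ((List.ofFn x).reverse) ((List.ofFn y).reverse) hlen hε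
    (fun p hp q hq => by
      obtain ⟨i, rfl⟩ := hmem p hp
      obtain ⟨j, rfl⟩ := hmem q hq
      exact h i j)
  simpa using this

-- ## basic bounds on lenSpan

lemma lenSpan_nonneg {X : Type*} [MetricSpace X] (xs : List X) : 0 ≤ lenSpan xs := by
  induction xs with
  | nil => simp [lenSpan]
  | cons x xs ih =>
    have := Metric.infDist_nonneg (x := x) (s := spanSet xs)
    show 0 ≤ Metric.infDist x (spanSet xs) + lenSpan xs
    linarith

lemma lenSpan_le_diam {X : Type*} [MetricSpace X] [CompactSpace X] (xs : List X) :
    lenSpan xs ≤ xs.length * Metric.diam (Set.univ : Set X) := by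
  induction xs with
  | nil => simp [lenSpan]
  | cons x xs ih =>
    have hhead : Metric.infDist x (spanSet xs) ≤ Metric.diam (Set.univ : Set X) := by
      cases xs with
      | nil => simp [spanSet_nil, Metric.infDist_empty, Metric.diam_nonneg]
      | cons p l =>
        have h1 : Metric.infDist x (spanSet (p :: l)) ≤ dist x p :=
          Metric.infDist_le_dist_of_mem (mem_spanSet_self (List.mem_cons_self))
        have h2 : dist x p ≤ Metric.diam (Set.univ : Set X) :=
          Metric.dist_le_diam_of_mem (isCompact_univ.isBounded) (Set.mem_univ _)
            (Set.mem_univ _)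
        linarith
    show Metric.infDist x (spanSet xs) + lenSpan xs ≤
      ((x :: xs).length : ℝ) * Metric.diam (Set.univ : Set X)
    have hcast : (((x :: xs).length : ℕ) : ℝ) = (xs.length : ℝ) + 1 := by simp
    rw [hcast]
    nlinarith [ih, hhead, Metric.diam_nonneg (s := (Set.univ : Set X))]

lemma lenSpan_const {X : Type*} [MetricSpace X] (c : X) (l : List X)
    (h : ∀ z ∈ l, z = c) : lenSpan l = 0 := by
  induction l with
  | nil => simp [lenSpan]
  | cons x xs ih =>
    have hx : x = c := h x (List.mem_cons_self)
    have htail : ∀ z ∈ xs, z = c := fun z hz => h z (List.mem_cons_of_mem _ hz)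
    have h2 : lenSpan xs = 0 := ih htail
    show Metric.infDist x (spanSet xs) + lenSpan xs = 0
    rw [h2]
    cases xs with
    | nil => simp [spanSet_nil, Metric.infDist_empty]
    | cons p l' =>
      have hp : p = c := htail p (List.mem_cons_self)
      have : x ∈ spanSet (p :: l') := by
        rw [hx, ← hp]
        exact mem_spanSet_self (List.mem_cons_self)
      rw [Metric.infDist_zero_of_mem this]
      ring

-- ## LCSN set lemmas

lemma zero_mem_lcsnSet (N : ℕ) (A B : Type*) [MetricSpace A] [MetricSpace B]
    [Nonempty A] [Nonempty B] :
    (0:ℝ) ∈ {r : ℝ | ∃ (x : Fin N → A) (y : Fin N → B),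
      (∀ i j, dist (x i) (x j) = dist (y i) (y j)) ∧
      r = lenSpan ((List.ofFn x).reverse)} := by
  refine ⟨fun _ => Classical.arbitrary A, fun _ => Classical.arbitrary B, by simp, ?_⟩
  rw [lenSpan_const (Classical.arbitrary A) _ ?_]
  intro z hz
  rw [List.mem_reverse] at hz
  obtain ⟨i, rfl⟩ := List.mem_ofFn.1 hz
  rfl

lemma bddAbove_lcsnSet (N : ℕ) (A B : Type*) [MetricSpace A] [MetricSpace B]
    [CompactSpace A] :
    BddAbove {r : ℝ | ∃ (x : Fin N → A) (y : Fin N → B),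
      (∀ i j, dist (x i) (x j) = dist (y i) (y j)) ∧
      r = lenSpan ((List.ofFn x).reverse)} := by
  refine ⟨N * Metric.diam (Set.univ : Set A), ?_⟩
  rintro r ⟨x, y, -, rfl⟩
  have := lenSpan_le_diam ((List.ofFn x).reverse)
  simpa using this

lemma LCSN_nonneg (N : ℕ) (A B : Type*) [MetricSpace A] [MetricSpace B]
    [CompactSpace A] [Nonempty A] [Nonempty B] : 0 ≤ LCSN N A B :=
  le_csSup (bddAbove_lcsnSet N A B) (zero_mem_lcsnSet N A B)

-- ## Gromov–Hausdorff transfer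

lemma exists_approx {A B : Type*} [MetricSpace A] [CompactSpace A] [Nonempty A]
    [MetricSpace B] [CompactSpace B] [Nonempty B] {N : ℕ} (x : Fin N → A) :
    ∃ x' : Fin N → B, ∀ i j,
      |dist (x i) (x j) - dist (x' i) (x' j)| ≤ 2 * GromovHausdorff.ghDist A B := by
  classical
  set Φ := GromovHausdorff.optimalGHInjl A B
  set Ψ := GromovHausdorff.optimalGHInjr A B
  have hΦ : Isometry Φ := GromovHausdorff.isometry_optimalGHInjl A B
  have hΨ : Isometry Ψ := GromovHausdorff.isometry_optimalGHInjr A B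
  have hne : (Set.range Ψ).Nonempty := Set.range_nonempty _
  have hcomp : IsCompact (Set.range Ψ) := isCompact_range hΨ.continuous
  have hfin : EMetric.hausdorffEdist (Set.range Φ) (Set.range Ψ) ≠ ⊤ :=
    Metric.hausdorffEdist_ne_top_of_nonempty_of_bounded (Set.range_nonempty _) hne
      (isCompact_range hΦ.continuous).isBounded hcomp.isBounded
  have hsel : ∀ i : Fin N, ∃ b : B, dist (Φ (x i)) (Ψ b) ≤ GromovHausdorff.ghDist A B := by
    intro i
    obtain ⟨w, hw, hdw⟩ := hcomp.exists_infDist_eq_dist hne (Φ (x i))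
    obtain ⟨b, rfl⟩ := hw
    refine ⟨b, ?_⟩
    rw [← hdw]
    have := Metric.infDist_le_hausdorffDist_of_mem (Set.mem_range_self (x i)) hfin
    rwa [GromovHausdorff.hausdorffDist_optimal] at this
  choose x' hx' using hsel
  refine ⟨x', fun i j => ?_⟩
  have h1 : dist (x i) (x j) = dist (Φ (x i)) (Φ (x j)) := (hΦ.dist_eq _ _).symm
  have h2 : dist (x' i) (x' j) = dist (Ψ (x' i)) (Ψ (x' j)) := (hΨ.dist_eq _ _).symm
  rw [h1, h2, ← Real.dist_eq]
  calc dist (dist (Φ (x i)) (Φ (x j))) (dist (Ψ (x' i)) (Ψ (x' j)))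
      ≤ dist (Φ (x i)) (Ψ (x' i)) + dist (Φ (x j)) (Ψ (x' j)) := dist_dist_dist_le _ _ _ _
    _ ≤ 2 * GromovHausdorff.ghDist A B := by linarith [hx' i, hx' j]

end AuxLemmas

/-- `LCS_N` is upper semi-continuous for the Gromov–Hausdorff topology on pairs
of compact real trees. -/
theorem LCSN_upper_semicontinuous (N : ℕ) (hN : 3 ≤ N)
    (T S : ℕ → Type) [∀ n, MetricSpace (T n)] [∀ n, CompactSpace (T n)]
    [∀ n, Nonempty (T n)] [∀ n, MetricSpace (S n)] [∀ n, CompactSpace (S n)]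
    [∀ n, Nonempty (S n)]
    (T₀ S₀ : Type) [MetricSpace T₀] [CompactSpace T₀] [Nonempty T₀]
    [MetricSpace S₀] [CompactSpace S₀] [Nonempty S₀]
    (hT : ∀ n, IsRealTree (T n)) (hS : ∀ n, IsRealTree (S n))
    (hT₀ : IsRealTree T₀) (hS₀ : IsRealTree S₀)
    (hTconv : Filter.Tendsto (fun n => GromovHausdorff.ghDist (T n) T₀)
      Filter.atTop (nhds 0))
    (hSconv : Filter.Tendsto (fun n => GromovHausdorff.ghDist (S n) S₀)
      Filter.atTop (nhds 0)) :
    Filter.limsup (fun n => LCSN N (T n) (S n)) Filter.atTop ≤ LCSN N T₀ S₀ := by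
  classical
  -- the eventual bound
  have hend : ∀ ε : ℝ, 0 < ε → ∀ᶠ n in Filter.atTop, LCSN N (T n) (S n) ≤ LCSN N T₀ S₀ + ε := by
    intro ε hε
    by_contra hcon
    rw [Filter.not_eventually] at hcon
    have hfreq : ∃ᶠ n in Filter.atTop, LCSN N T₀ S₀ + ε < LCSN N (T n) (S n) :=
      hcon.mono fun n h => lt_of_not_ge h
    obtain ⟨φ, hφ, hφP⟩ := Filter.extraction_of_frequently_atTop hfreq
    -- choose near-optimal configurations
    have hsel : ∀ k, ∃ (x : Fin N → T (φ k)) (y : Fin N → S (φ k)),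
        (∀ i j, dist (x i) (x j) = dist (y i) (y j)) ∧
        LCSN N T₀ S₀ + ε < lenSpan ((List.ofFn x).reverse) := by
      intro k
      obtain ⟨r, hr, hlt⟩ := exists_lt_of_lt_csSup
        ⟨0, zero_mem_lcsnSet N (T (φ k)) (S (φ k))⟩ (hφP k)
      obtain ⟨x, y, hxy, rfl⟩ := hr
      exact ⟨x, y, hxy, hlt⟩
    choose x y hxy hlen using hsel
    -- transfer to the limit spaces
    choose x' hx' using fun k => exists_approx (B := T₀) (x k)
    choose y' hy' using fun k => exists_approx (B := S₀) (y k)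
    -- extract a convergent subsequence
    obtain ⟨z, -, ψ, hψ, htend⟩ := isCompact_univ.tendsto_subseq
      (x := fun k => ((x' k, y' k) : (Fin N → T₀) × (Fin N → S₀)))
      (fun k => Set.mem_univ _)
    obtain ⟨xs, ys⟩ := z
    have hxt : Filter.Tendsto (fun k => x' (ψ k)) Filter.atTop (nhds xs) :=
      (continuous_fst.tendsto _).comp htend
    have hyt : Filter.Tendsto (fun k => y' (ψ k)) Filter.atTop (nhds ys) :=
      (continuous_snd.tendsto _).comp htend
    have hdx : Filter.Tendsto (fun k => dist (x' (ψ k)) xs) Filter.atTop (nhds 0) :=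
      tendsto_iff_dist_tendsto_zero.1 hxt
    have hdy : Filter.Tendsto (fun k => dist (y' (ψ k)) ys) Filter.atTop (nhds 0) :=
      tendsto_iff_dist_tendsto_zero.1 hyt
    have hφψ : StrictMono (φ ∘ ψ) := hφ.comp hψ
    have hδT : Filter.Tendsto (fun k => GromovHausdorff.ghDist (T (φ (ψ k))) T₀)
        Filter.atTop (nhds 0) := hTconv.comp hφψ.tendsto_atTop
    have hδS : Filter.Tendsto (fun k => GromovHausdorff.ghDist (S (φ (ψ k))) S₀)
        Filter.atTop (nhds 0) := hSconv.comp hφψ.tendsto_atTop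
    have hgh_nonneg : ∀ k, (0:ℝ) ≤ GromovHausdorff.ghDist (T (φ (ψ k))) T₀ := by
      intro k
      exact dist_nonneg
    have hgh_nonneg' : ∀ k, (0:ℝ) ≤ GromovHausdorff.ghDist (S (φ (ψ k))) S₀ := by
      intro k
      exact dist_nonneg
    -- the limit configuration has matching distance matrices
    have hmatch : ∀ i j, dist (xs i) (xs j) = dist (ys i) (ys j) := by
      intro i j
      have hxi : Filter.Tendsto (fun k => x' (ψ k) i) Filter.atTop (nhds (xs i)) :=
        (continuous_apply i).tendsto xs |>.comp hxt
      have hxj : Filter.Tendsto (fun k => x' (ψ k) j) Filter.atTop (nhds (xs j)) :=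
        (continuous_apply j).tendsto xs |>.comp hxt
      have hyi : Filter.Tendsto (fun k => y' (ψ k) i) Filter.atTop (nhds (ys i)) :=
        (continuous_apply i).tendsto ys |>.comp hyt
      have hyj : Filter.Tendsto (fun k => y' (ψ k) j) Filter.atTop (nhds (ys j)) :=
        (continuous_apply j).tendsto ys |>.comp hyt
      have h3 : Filter.Tendsto (fun k => dist (x' (ψ k) i) (x' (ψ k) j)
          - dist (y' (ψ k) i) (y' (ψ k) j)) Filter.atTop
          (nhds (dist (xs i) (xs j) - dist (ys i) (ys j))) :=
        (hxi.dist hxj).sub (hyi.dist hyj)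
      have hb : ∀ k, |dist (x' (ψ k) i) (x' (ψ k) j) - dist (y' (ψ k) i) (y' (ψ k) j)|
          ≤ 2 * GromovHausdorff.ghDist (T (φ (ψ k))) T₀
            + 2 * GromovHausdorff.ghDist (S (φ (ψ k))) S₀ := by
        intro k
        have e1 := abs_le.1 (hx' (ψ k) i j)
        have e2 := abs_le.1 (hy' (ψ k) i j)
        have e3 := hxy (ψ k) i j
        rw [abs_le]
        constructor <;> [skip; skip] <;> nlinarith [e1.1, e1.2, e2.1, e2.2]
      have hbt : Filter.Tendsto (fun k => 2 * GromovHausdorff.ghDist (T (φ (ψ k))) T₀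
          + 2 * GromovHausdorff.ghDist (S (φ (ψ k))) S₀) Filter.atTop (nhds 0) := by
        have := (hδT.const_mul 2).add (hδS.const_mul 2)
        simpa using this
      have h4 : Filter.Tendsto (fun k => dist (x' (ψ k) i) (x' (ψ k) j)
          - dist (y' (ψ k) i) (y' (ψ k) j)) Filter.atTop (nhds 0) :=
        squeeze_zero_norm hb hbt
      have := tendsto_nhds_unique h3 h4
      linarith
    -- the limit configuration length
    have hrmem : lenSpan ((List.ofFn xs).reverse) ∈ {r : ℝ | ∃ (x : Fin N → T₀)
        (y : Fin N → S₀), (∀ i j, dist (x i) (x j) = dist (y i) (y j)) ∧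
        r = lenSpan ((List.ofFn x).reverse)} := ⟨xs, ys, hmatch, rfl⟩
    have hrle : lenSpan ((List.ofFn xs).reverse) ≤ LCSN N T₀ S₀ :=
      le_csSup (bddAbove_lcsnSet N T₀ S₀) hrmem
    -- the chain of inequalities
    have hchain : ∀ k, ε < 2 * N * (2 * GromovHausdorff.ghDist (T (φ (ψ k))) T₀)
        + 2 * N * (2 * dist (x' (ψ k)) xs) := by
      intro k
      have c1 : LCSN N T₀ S₀ + ε < lenSpan ((List.ofFn (x (ψ k))).reverse) :=
        hlen (ψ k)
      have c2 : lenSpan ((List.ofFn (x (ψ k))).reverse) ≤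
          lenSpan ((List.ofFn (x' (ψ k))).reverse)
            + 2 * N * (2 * GromovHausdorff.ghDist (T (φ (ψ k))) T₀) :=
        lenSpan_ofFn_le (hT _) _ _ (by linarith [hgh_nonneg k]) (hx' (ψ k))
      have c3 : lenSpan ((List.ofFn (x' (ψ k))).reverse) ≤
          lenSpan ((List.ofFn xs).reverse) + 2 * N * (2 * dist (x' (ψ k)) xs) := by
        refine lenSpan_ofFn_le hT₀ _ _ (by positivity) ?_
        intro i j
        rw [← Real.dist_eq]
        calc dist (dist (x' (ψ k) i) (x' (ψ k) j)) (dist (xs i) (xs j))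
            ≤ dist (x' (ψ k) i) (xs i) + dist (x' (ψ k) j) (xs j) :=
              dist_dist_dist_le _ _ _ _
          _ ≤ 2 * dist (x' (ψ k)) xs := by
              linarith [dist_le_pi_dist (x' (ψ k)) xs i, dist_le_pi_dist (x' (ψ k)) xs j]
      linarith
    -- contradiction with convergence to zero
    have hsum : Filter.Tendsto (fun k => 2 * (N:ℝ) * (2 * GromovHausdorff.ghDist
        (T (φ (ψ k))) T₀) + 2 * N * (2 * dist (x' (ψ k)) xs)) Filter.atTop (nhds 0) := by
      have := ((hδT.const_mul 2).const_mul (2 * (N:ℝ))).add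
        ((hdx.const_mul 2).const_mul (2 * (N:ℝ)))
      simpa [mul_assoc] using this
    have := (hsum.eventually (gt_mem_nhds hε)).exists
    obtain ⟨k, hk⟩ := this
    exact absurd (hchain k) (not_lt.2 hk.le)
  -- conclude about the limsup
  have hcob : Filter.IsCoboundedUnder (· ≤ ·) Filter.atTop
      (fun n => LCSN N (T n) (S n)) := by
    refine Filter.IsBoundedUnder.isCoboundedUnder_le ⟨0, ?_⟩
    rw [Filter.eventually_map]
    exact Filter.Eventually.of_forall fun n => LCSN_nonneg N (T n) (S n)
  by_contra hlt
  push_neg at hlt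
  have hε : 0 < (Filter.limsup (fun n => LCSN N (T n) (S n)) Filter.atTop - LCSN N T₀ S₀) / 2 :=
    by linarith
  have hev := hend _ hε
  have := Filter.limsup_le_of_le hcob hev
  linarith
end

section
/- The function $\operatorname{LCS}_3$ is continuous on the space of pairs of compact real trees with the Gromov–Hausdorff topology: if $T^n\to T$ and $S^n\to S$ in Gromov–Hausdorff distance, then $\operatorname{LCS}_3(T^n,S^n)\to\operatorname{LCS}_3(T,S)$, where $\operatorname{LCS}_3(T,S)=\sup\{\tfrac12 d(x_1,x_2)+\tfrac12 d(x_2,x_3)+\tfrac12 d(x_3,x_1)\}$ over triples $x_1,x_2,x_3\in T$, $x_1',x_2',x_3'\in S$ with $d(x_i,x_j)=d'(x_i',x_j')$ for all $i,j$. -/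
/-- The maximal total length of a common Y-shaped subtree: supremum of the
half-perimeter over triples with matching pairwise distances. -/
noncomputable def LCS3 (A B : Type*) [MetricSpace A] [MetricSpace B] : ℝ :=
  sSup {r : ℝ | ∃ (x₁ x₂ x₃ : A) (y₁ y₂ y₃ : B),
    dist x₁ x₂ = dist y₁ y₂ ∧ dist x₂ x₃ = dist y₂ y₃ ∧ dist x₃ x₁ = dist y₃ y₁ ∧
    r = dist x₁ x₂ / 2 + dist x₂ x₃ / 2 + dist x₃ x₁ / 2}

open Set Metric

section GromovProduct

variable {X Y : Type*} [MetricSpace X] [MetricSpace Y]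

/-- The Gromov product `(y | z)ₓ`; in a tree, the length of the leg at `x` of the tripod
spanned by `x, y, z`. -/
noncomputable def gromovProduct (x y z : X) : ℝ := (dist x y + dist x z - dist y z) / 2

lemma gromovProduct_nonneg (x y z : X) : 0 ≤ gromovProduct x y z := by
  have := dist_triangle y x z
  rw [dist_comm y x] at this
  unfold gromovProduct
  linarith

lemma gromovProduct_add_add (x y z : X) :
    gromovProduct x y z + gromovProduct y x z + gromovProduct z x y =
      dist x y / 2 + dist y z / 2 + dist z x / 2 := by
  unfold gromovProduct
  rw [dist_comm y x, dist_comm z x, dist_comm z y]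
  ring

lemma gromovProduct_eq_of_dist_eq {x₁ x₂ x₃ : X} {y₁ y₂ y₃ : Y}
    (h₁₂ : dist x₁ x₂ = dist y₁ y₂) (h₂₃ : dist x₂ x₃ = dist y₂ y₃)
    (h₃₁ : dist x₃ x₁ = dist y₃ y₁) :
    gromovProduct x₁ x₂ x₃ = gromovProduct y₁ y₂ y₃ ∧
      gromovProduct x₂ x₁ x₃ = gromovProduct y₂ y₁ y₃ ∧
      gromovProduct x₃ x₁ x₂ = gromovProduct y₃ y₁ y₂ := by
  unfold gromovProduct
  simp only [dist_comm x₁ x₃, dist_comm x₂ x₁, dist_comm x₃ x₂, dist_comm y₁ y₃,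
    dist_comm y₂ y₁, dist_comm y₃ y₂, h₁₂, h₂₃, h₃₁, and_self]

lemma gromovProduct_sub_le_of_abs_dist_sub_le {f : X → Y} {δ : ℝ}
    (hf : ∀ a b, |dist a b - dist (f a) (f b)| ≤ δ) (x y z : X) :
    gromovProduct x y z - 3 / 2 * δ ≤ gromovProduct (f x) (f y) (f z) := by
  have hxy := (abs_le.1 (hf x y)).2
  have hxz := (abs_le.1 (hf x z)).2
  have hyz := (abs_le.1 (hf y z)).1
  unfold gromovProduct
  linarith

end GromovProduct

section Geodesic

variable {X : Type*} [MetricSpace X]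

lemma mem_geo_comm {x y w : X} : w ∈ geo x y ↔ w ∈ geo y x := by
  change _ = _ ↔ _ = _
  rw [dist_comm y w, dist_comm w x, dist_comm y x, add_comm]

lemma dist_eq_gromovProduct_of_mem_geo {x y z m : X} (hxy : m ∈ geo x y) (hxz : m ∈ geo x z)
    (hyz : m ∈ geo y z) : dist m x = gromovProduct x y z := by
  simp only [geo, mem_ofPred_eq] at hxy hxz hyz
  unfold gromovProduct
  linarith [dist_comm x m, dist_comm y m]

lemma dist_eq_add_of_mem_geo {x y m p q : X} (hm : m ∈ geo x y) (hp : p ∈ geo m x)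
    (hq : q ∈ geo m y) : dist p q = dist m p + dist m q := by
  simp only [geo, mem_ofPred_eq] at hm hp hq
  refine le_antisymm ?_ ?_
  · linarith [dist_triangle p m q, dist_comm p m]
  · linarith [dist_triangle4 x p q y, dist_comm x p, dist_comm x m]

lemma dist_endpoints_of_isometry_domRestrict {γ : ℝ → X} {L t : ℝ}
    (hγ : Isometry ((Icc 0 L).domRestrict γ)) (ht : t ∈ Icc 0 L) :
    dist (γ 0) (γ t) = t ∧ dist (γ t) (γ L) = L - t := by
  have hL : (0 : ℝ) ≤ L := ht.1.trans ht.2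
  have h0 := hγ.dist_eq ⟨0, left_mem_Icc.2 hL⟩ ⟨t, ht⟩
  have h1 := hγ.dist_eq ⟨t, ht⟩ ⟨L, right_mem_Icc.2 hL⟩
  simp only [domRestrict_apply, Subtype.dist_eq, Real.dist_eq] at h0 h1
  rw [h0, h1, zero_sub, abs_neg, abs_of_nonneg ht.1, abs_sub_comm,
    abs_of_nonneg (sub_nonneg.2 ht.2)]
  exact ⟨rfl, rfl⟩

end Geodesic

namespace IsRealTree

variable {X : Type*} [MetricSpace X]

lemma exists_geodesic (hX : IsRealTree X) (x y : X) :
    ∃ γ : ℝ → X, Continuous γ ∧ Isometry ((Icc 0 (dist x y)).domRestrict γ) ∧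
      γ 0 = x ∧ γ (dist x y) = y := by
  obtain ⟨g, ⟨hg, hg0, hg1⟩, -⟩ := hX.1 x y
  have hiso : Isometry g := Isometry.of_dist_eq fun a b => by rw [hg, Subtype.dist_eq, Real.dist_eq]
  refine ⟨IccExtend dist_nonneg g, continuous_IccExtend_iff.2 hiso.continuous, ?_,
    by rw [IccExtend_left, hg0], by rw [IccExtend_right, hg1]⟩
  convert hiso using 1
  ext ⟨t, ht⟩
  exact IccExtend_of_mem _ g ht

lemma exists_mem_geo_dist_eq (hX : IsRealTree X) (x y : X) {t : ℝ} (ht : t ∈ Icc 0 (dist x y)) :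
    ∃ p ∈ geo x y, dist x p = t := by
  obtain ⟨γ, -, hγ, hγ0, hγ1⟩ := hX.exists_geodesic x y
  obtain ⟨h0, h1⟩ := dist_endpoints_of_isometry_domRestrict hγ ht
  rw [hγ0] at h0
  rw [hγ1] at h1
  refine ⟨γ t, ?_, h0⟩
  simp only [geo, mem_ofPred_eq, h0, h1]
  ring

lemma mem_geo_of_injOn (hX : IsRealTree X) {f : ℝ → X} (hf : Continuous f) {L s : ℝ}
    (hinj : InjOn f (Icc 0 L)) (hs : s ∈ Icc 0 L) : f s ∈ geo (f 0) (f L) := by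
  rcases (hs.1.trans hs.2).eq_or_lt with rfl | hL
  · obtain rfl : s = 0 := le_antisymm hs.2 hs.1
    simp [geo]
  set g : Icc (0 : ℝ) 1 → X := fun t => f (t * L)
  have hg : Continuous g := hf.comp (continuous_subtype_val.mul continuous_const)
  have hginj : Function.Injective g := fun t u htu => Subtype.ext <| mul_right_cancel₀ hL.ne' <|
    hinj ⟨mul_nonneg t.2.1 hL.le, mul_le_of_le_one_left hL.le t.2.2⟩
      ⟨mul_nonneg u.2.1 hL.le, mul_le_of_le_one_left hL.le u.2.2⟩ htu
  have hrange := hX.2 g hg hginj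
  simp only [g, zero_mul, one_mul] at hrange
  rw [← hrange]
  exact ⟨⟨s / L, div_nonneg hs.1 hL.le, (div_le_one hL).2 hs.2⟩, by simp [hL.ne']⟩

lemma mem_geo_of_arcs (hX : IsRealTree X) {p q : ℝ → X} {a b : ℝ} (ha : 0 ≤ a) (hb : 0 ≤ b)
    (hp : Continuous p) (hq : Continuous q) (hpinj : InjOn p (Icc 0 a))
    (hqinj : InjOn q (Icc 0 b)) (hpq : p a = q 0)
    (hmeet : ∀ s ∈ Icc 0 a, ∀ u ∈ Icc 0 b, p s = q u → u = 0) :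
    p a ∈ geo (p 0) (q b) := by
  set F : ℝ → X := fun s => if s ≤ a then p s else q (s - a)
  have hF : Continuous F := Continuous.if_le hp (hq.comp (continuous_id.sub continuous_const))
    continuous_id continuous_const fun s hs => by rw [hs, sub_self, hpq]
  have hcross : ∀ s ∈ Icc 0 (a + b), ∀ u ∈ Icc 0 (a + b), s ≤ a → ¬u ≤ a → F s ≠ F u := by
    intro s hs u hu hsa hua hsu
    simp only [F, if_pos hsa, if_neg hua] at hsu
    have := hmeet s ⟨hs.1, hsa⟩ (u - a) ⟨by linarith, by linarith [hu.2]⟩ hsu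
    exact hua (by linarith)
  have hFinj : InjOn F (Icc 0 (a + b)) := by
    intro s hs u hu hsu
    by_cases hsa : s ≤ a <;> by_cases hua : u ≤ a
    · simp only [F, if_pos hsa, if_pos hua] at hsu
      exact hpinj ⟨hs.1, hsa⟩ ⟨hu.1, hua⟩ hsu
    · exact absurd hsu (hcross s hs u hu hsa hua)
    · exact absurd hsu.symm (hcross u hu s hs hua hsa)
    · simp only [F, if_neg hsa, if_neg hua] at hsu
      have := hqinj ⟨by linarith, by linarith [hs.2]⟩ ⟨by linarith, by linarith [hu.2]⟩ hsu
      linarith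
  have hFb : F (a + b) = q b := by
    by_cases hab : a + b ≤ a
    · obtain rfl : b = 0 := by linarith
      simp only [F, add_zero, le_refl, if_true, hpq]
    · simp only [F, if_neg hab, add_sub_cancel_left]
  have := hX.mem_geo_of_injOn hF hFinj ⟨ha, le_add_of_nonneg_right hb⟩
  simpa only [F, if_pos le_rfl, if_pos ha, hFb] using this

theorem exists_median (hX : IsRealTree X) (x y z : X) :
    ∃ m, m ∈ geo x y ∧ m ∈ geo y z ∧ m ∈ geo x z := by
  obtain ⟨γ, hγc, hγ, hγ0, hγ1⟩ := hX.exists_geodesic x y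
  set L := dist x y
  have hγdist : ∀ t ∈ Icc 0 L, dist x (γ t) = t ∧ dist (γ t) y = L - t := fun t ht => by
    simpa only [hγ0, hγ1] using dist_endpoints_of_isometry_domRestrict hγ ht
  -- `m = γ t₁` is the last point of `[x, y]` lying on a geodesic from `x` to `z`.
  have hcpt : IsCompact (Icc 0 L ∩ {t | t + dist (γ t) z = dist x z}) :=
    isCompact_Icc.inter_right <| isClosed_eq (continuous_id.add (hγc.dist continuous_const))
      continuous_const
  obtain ⟨t₁, ⟨ht₁, ht₁z⟩, ht₁max⟩ := hcpt.exists_isGreatest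
    ⟨0, left_mem_Icc.2 dist_nonneg, by simp [hγ0]⟩
  set m := γ t₁
  have ht₁z' : t₁ + dist m z = dist x z := ht₁z
  obtain ⟨hxm, hmy⟩ := hγdist t₁ ht₁
  obtain ⟨σ, hσc, hσ, hσ0, hσ1⟩ := hX.exists_geodesic m z
  have hγinj : InjOn γ (Icc 0 L) := injOn_iff_injective.2 hγ.injective
  have hflip : ∀ s ∈ Icc 0 (L - t₁), L - s ∈ Icc 0 L := fun s hs =>
    ⟨by linarith [hs.2, ht₁.1], by linarith [hs.1]⟩
  refine ⟨m, show dist x m + dist m y = L by rw [hxm, hmy]; ring, ?_,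
    show dist x m + dist m z = dist x z by rw [hxm]; exact ht₁z'⟩
  -- A point of `[m, y]` on `[m, z]` other than `m` would be a later point of `[x, y]` on a
  -- geodesic from `x` to `z`.
  have hmeet : ∀ s ∈ Icc 0 (L - t₁), ∀ u ∈ Icc 0 (dist m z), γ (L - s) = σ u → u = 0 := by
    intro s hs u hu hsu
    obtain ⟨hmσ, hσz⟩ := dist_endpoints_of_isometry_domRestrict hσ hu
    rw [hσ0] at hmσ
    rw [hσ1] at hσz
    have hxσ := (hγdist _ (hflip s hs)).1
    rw [hsu] at hxσ
    have h₁ := dist_triangle x m (σ u)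
    have h₂ := dist_triangle x (σ u) z
    have hle : L - s ≤ t₁ :=
      ht₁max ⟨hflip s hs, show L - s + dist (γ (L - s)) z = dist x z by rw [hsu]; linarith⟩
    linarith [hu.1]
  have := hX.mem_geo_of_arcs (p := fun s => γ (L - s)) (sub_nonneg.2 ht₁.2) dist_nonneg
    (by fun_prop) hσc (fun s hs u hu hsu => by linarith [hγinj (hflip s hs) (hflip u hu) hsu])
    (injOn_iff_injective.2 hσ.injective) (by simp only [sub_sub_cancel, hσ0, m]) hmeet
  simpa only [sub_sub_cancel, sub_zero, hγ1, hσ1] using this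

theorem exists_tripod (hX : IsRealTree X) (x y z : X) {a b c : ℝ}
    (ha : a ∈ Icc 0 (gromovProduct x y z)) (hb : b ∈ Icc 0 (gromovProduct y x z))
    (hc : c ∈ Icc 0 (gromovProduct z x y)) :
    ∃ x' y' z' : X, dist x' y' = a + b ∧ dist y' z' = b + c ∧ dist z' x' = c + a := by
  obtain ⟨m, hxy, hyz, hxz⟩ := hX.exists_median x y z
  have hyx := mem_geo_comm.1 hxy
  have hzx := mem_geo_comm.1 hxz
  have hzy := mem_geo_comm.1 hyz
  rw [← dist_eq_gromovProduct_of_mem_geo hxy hxz hyz] at ha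
  rw [← dist_eq_gromovProduct_of_mem_geo hyx hyz hxz] at hb
  rw [← dist_eq_gromovProduct_of_mem_geo hzx hzy hxy] at hc
  obtain ⟨x', hx', rfl⟩ := hX.exists_mem_geo_dist_eq m x ha
  obtain ⟨y', hy', rfl⟩ := hX.exists_mem_geo_dist_eq m y hb
  obtain ⟨z', hz', rfl⟩ := hX.exists_mem_geo_dist_eq m z hc
  exact ⟨x', y', z', dist_eq_add_of_mem_geo hxy hx' hy', dist_eq_add_of_mem_geo hyz hy' hz',
    dist_eq_add_of_mem_geo hzx hz' hx'⟩

end IsRealTree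

section LCS3

variable {A B A' B' : Type*} [MetricSpace A] [MetricSpace B] [MetricSpace A'] [MetricSpace B']

lemma le_LCS3 [BoundedSpace A] {x₁ x₂ x₃ : A} {y₁ y₂ y₃ : B} (h₁₂ : dist x₁ x₂ = dist y₁ y₂)
    (h₂₃ : dist x₂ x₃ = dist y₂ y₃) (h₃₁ : dist x₃ x₁ = dist y₃ y₁) :
    dist x₁ x₂ / 2 + dist x₂ x₃ / 2 + dist x₃ x₁ / 2 ≤ LCS3 A B := by
  refine le_csSup ⟨3 / 2 * diam (univ : Set A), ?_⟩ ⟨x₁, x₂, x₃, y₁, y₂, y₃, h₁₂, h₂₃, h₃₁, rfl⟩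
  rintro r ⟨a₁, a₂, a₃, -, -, -, -, -, -, rfl⟩
  have hd : ∀ a a' : A, dist a a' ≤ diam (univ : Set A) := fun a a' =>
    dist_le_diam_of_mem (Bornology.isBounded_univ.2 ‹_›) (mem_univ a) (mem_univ a')
  linarith [hd a₁ a₂, hd a₂ a₃, hd a₃ a₁]

lemma LCS3_le [Nonempty A] [Nonempty B] {c : ℝ}
    (h : ∀ (x₁ x₂ x₃ : A) (y₁ y₂ y₃ : B), dist x₁ x₂ = dist y₁ y₂ → dist x₂ x₃ = dist y₂ y₃ →
      dist x₃ x₁ = dist y₃ y₁ → dist x₁ x₂ / 2 + dist x₂ x₃ / 2 + dist x₃ x₁ / 2 ≤ c) :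
    LCS3 A B ≤ c := by
  obtain ⟨a⟩ := ‹Nonempty A›
  obtain ⟨b⟩ := ‹Nonempty B›
  refine csSup_le ⟨0, a, a, a, b, b, b, by simp⟩ ?_
  rintro r ⟨x₁, x₂, x₃, y₁, y₂, y₃, h₁₂, h₂₃, h₃₁, rfl⟩
  exact h x₁ x₂ x₃ y₁ y₂ y₃ h₁₂ h₂₃ h₃₁

/-- Cutting the legs of the two tripods down to their minima gives a common tripod. -/
lemma sum_min_gromovProduct_le_LCS3 [BoundedSpace A] (hA : IsRealTree A) (hB : IsRealTree B)
    (x₁ x₂ x₃ : A) (y₁ y₂ y₃ : B) :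
    min (gromovProduct x₁ x₂ x₃) (gromovProduct y₁ y₂ y₃) +
      min (gromovProduct x₂ x₁ x₃) (gromovProduct y₂ y₁ y₃) +
      min (gromovProduct x₃ x₁ x₂) (gromovProduct y₃ y₁ y₂) ≤ LCS3 A B := by
  set a := min (gromovProduct x₁ x₂ x₃) (gromovProduct y₁ y₂ y₃)
  set b := min (gromovProduct x₂ x₁ x₃) (gromovProduct y₂ y₁ y₃)
  set c := min (gromovProduct x₃ x₁ x₂) (gromovProduct y₃ y₁ y₂)
  have ha : 0 ≤ a := le_min (gromovProduct_nonneg _ _ _) (gromovProduct_nonneg _ _ _)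
  have hb : 0 ≤ b := le_min (gromovProduct_nonneg _ _ _) (gromovProduct_nonneg _ _ _)
  have hc : 0 ≤ c := le_min (gromovProduct_nonneg _ _ _) (gromovProduct_nonneg _ _ _)
  obtain ⟨u₁, u₂, u₃, hu₁₂, hu₂₃, hu₃₁⟩ := hA.exists_tripod x₁ x₂ x₃
    ⟨ha, min_le_left _ _⟩ ⟨hb, min_le_left _ _⟩ ⟨hc, min_le_left _ _⟩
  obtain ⟨v₁, v₂, v₃, hv₁₂, hv₂₃, hv₃₁⟩ := hB.exists_tripod y₁ y₂ y₃
    ⟨ha, min_le_right _ _⟩ ⟨hb, min_le_right _ _⟩ ⟨hc, min_le_right _ _⟩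
  have := le_LCS3 (hu₁₂.trans hv₁₂.symm) (hu₂₃.trans hv₂₃.symm) (hu₃₁.trans hv₃₁.symm)
  rw [hu₁₂, hu₂₃, hu₃₁] at this
  linarith

lemma LCS3_le_LCS3_add [Nonempty A] [Nonempty B] [BoundedSpace A'] (hA' : IsRealTree A')
    (hB' : IsRealTree B') {f : A → A'} {g : B → B'} {δ : ℝ}
    (hf : ∀ a a', |dist a a' - dist (f a) (f a')| ≤ δ)
    (hg : ∀ b b', |dist b b' - dist (g b) (g b')| ≤ δ) :
    LCS3 A B ≤ LCS3 A' B' + 9 / 2 * δ := by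
  refine LCS3_le fun x₁ x₂ x₃ y₁ y₂ y₃ h₁₂ h₂₃ h₃₁ => ?_
  obtain ⟨e₁, e₂, e₃⟩ := gromovProduct_eq_of_dist_eq h₁₂ h₂₃ h₃₁
  have hf' := gromovProduct_sub_le_of_abs_dist_sub_le hf
  have hg' := gromovProduct_sub_le_of_abs_dist_sub_le hg
  have h₁ := le_min (hf' x₁ x₂ x₃) (e₁ ▸ hg' y₁ y₂ y₃)
  have h₂ := le_min (hf' x₂ x₁ x₃) (e₂ ▸ hg' y₂ y₁ y₃)
  have h₃ := le_min (hf' x₃ x₁ x₂) (e₃ ▸ hg' y₃ y₁ y₂)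
  linarith [sum_min_gromovProduct_le_LCS3 hA' hB' (f x₁) (f x₂) (f x₃) (g y₁) (g y₂) (g y₃),
    gromovProduct_add_add x₁ x₂ x₃]

end LCS3

section GromovHausdorff

open GromovHausdorff

variable (A B : Type*) [MetricSpace A] [CompactSpace A] [Nonempty A]
  [MetricSpace B] [CompactSpace B] [Nonempty B]

theorem GromovHausdorff.ghDist_comm : ghDist A B = ghDist B A := dist_comm _ _

/-- Send each point to one nearest to it in an optimal coupling. -/
lemma exists_abs_dist_sub_le_two_ghDist :
    ∃ f : A → B, ∀ a a', |dist a a' - dist (f a) (f a')| ≤ 2 * ghDist A B := by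
  obtain ⟨Φ, Ψ, hΦ, hΨ, hd⟩ := ghDist_eq_hausdorffDist A B
  have hΨc := isCompact_range hΨ.continuous
  have hfin := hausdorffEDist_ne_top_of_nonempty_of_bounded (range_nonempty Φ)
    (range_nonempty Ψ) (isCompact_range hΦ.continuous).isBounded hΨc.isBounded
  have hnear : ∀ a, ∃ b, dist (Φ a) (Ψ b) ≤ ghDist A B := fun a => by
    obtain ⟨_, ⟨b, rfl⟩, hb⟩ := hΨc.exists_infDist_eq_dist (range_nonempty Ψ) (Φ a)
    exact ⟨b, hb ▸ hd ▸ infDist_le_hausdorffDist_of_mem (mem_range_self a) hfin⟩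
  choose f hf using hnear
  refine ⟨f, fun a a' => ?_⟩
  have := dist_dist_dist_le (Φ a) (Φ a') (Ψ (f a)) (Ψ (f a'))
  rw [Real.dist_eq, hΦ.dist_eq, hΨ.dist_eq] at this
  linarith [hf a, hf a']

variable {A B} {A' B' : Type*} [MetricSpace A'] [CompactSpace A'] [Nonempty A']
  [MetricSpace B'] [CompactSpace B'] [Nonempty B']

theorem abs_LCS3_sub_LCS3_le (hA : IsRealTree A) (hB : IsRealTree B) (hA' : IsRealTree A')
    (hB' : IsRealTree B') :
    |LCS3 A B - LCS3 A' B'| ≤ 9 * max (ghDist A A') (ghDist B B') := by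
  obtain ⟨f, hf⟩ := exists_abs_dist_sub_le_two_ghDist A A'
  obtain ⟨g, hg⟩ := exists_abs_dist_sub_le_two_ghDist B B'
  obtain ⟨f', hf'⟩ := exists_abs_dist_sub_le_two_ghDist A' A
  obtain ⟨g', hg'⟩ := exists_abs_dist_sub_le_two_ghDist B' B
  rw [ghDist_comm A'] at hf'
  rw [ghDist_comm B'] at hg'
  set D := max (ghDist A A') (ghDist B B')
  have hweaken : ∀ {r s : ℝ}, r ≤ 2 * s → s ≤ D → r ≤ 2 * D := fun h hs => h.trans (by linarith)
  have h₁ := LCS3_le_LCS3_add hA' hB' (fun a a' => hweaken (hf a a') (le_max_left _ _))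
    (fun b b' => hweaken (hg b b') (le_max_right _ _))
  have h₂ := LCS3_le_LCS3_add hA hB (fun a a' => hweaken (hf' a a') (le_max_left _ _))
    (fun b b' => hweaken (hg' b b') (le_max_right _ _))
  rw [abs_sub_le_iff]
  constructor <;> linarith

end GromovHausdorff

/-- `LCS_3` is continuous for the Gromov–Hausdorff topology on pairs of compact
real trees. -/
theorem LCS3_continuous
    (T S : ℕ → Type) [∀ n, MetricSpace (T n)] [∀ n, CompactSpace (T n)]
    [∀ n, Nonempty (T n)] [∀ n, MetricSpace (S n)] [∀ n, CompactSpace (S n)]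
    [∀ n, Nonempty (S n)]
    (T₀ S₀ : Type) [MetricSpace T₀] [CompactSpace T₀] [Nonempty T₀]
    [MetricSpace S₀] [CompactSpace S₀] [Nonempty S₀]
    (hT : ∀ n, IsRealTree (T n)) (hS : ∀ n, IsRealTree (S n))
    (hT₀ : IsRealTree T₀) (hS₀ : IsRealTree S₀)
    (hTconv : Filter.Tendsto (fun n => GromovHausdorff.ghDist (T n) T₀)
      Filter.atTop (nhds 0))
    (hSconv : Filter.Tendsto (fun n => GromovHausdorff.ghDist (S n) S₀)
      Filter.atTop (nhds 0)) :
    Filter.Tendsto (fun n => LCS3 (T n) (S n)) Filter.atTop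
      (nhds (LCS3 T₀ S₀)) := by
  have hbound := (hTconv.max hSconv).const_mul 9
  rw [max_self, mul_zero] at hbound
  refine tendsto_iff_dist_tendsto_zero.2 <| squeeze_zero (fun _ => dist_nonneg) (fun n => ?_) hbound
  rw [Real.dist_eq]
  exact abs_LCS3_sub_LCS3_le (hT n) (hS n) hT₀ hS₀
end
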